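/- arXiv:1012.3686 — 8 statements merged into one kernel-verified Lean document; each statement's English description precedes it below -/
import Mathlib

section
/- In any exact covering system {a_i mod n_i}_{i=1}^k of ℤ with 2 ≤ n_1 ≤ n_2 ≤ … ≤ n_k and k ≥ 2, the largest modulus n_k is repeated, i.e., n_{k-1} = n_k. -/
/-!
If the largest modulus `M` occurred only once, take a primitive `M`-th root of unity `ζ` and a
common multiple `N` of all moduli. The sum of `ζ ^ x` over `0 ≤ x < N` vanishes, and the cover
splits it into one sum per residue class. The sum over a class `a mod m` is fixed by
multiplication with `ζ ^ m` (shift `x ↦ x + m`, which is a bijection modulo `N`), so it vanishes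
whenever `m < M`; on the class mod `M` the summand is constantly `ζ ^ a`, so that sum does not.
-/

open Finset

namespace Function.Periodic

variable {M : Type*} {g : ℕ → M} {N : ℕ}

theorem sum_range_comp_add_nat [AddCommMonoid M] (hg : Periodic g N) (m : ℕ) :
    ∑ x ∈ range N, g (x + m) = ∑ x ∈ range N, g x := by
  induction m generalizing g with
  | zero => rfl
  | succ m ih =>
    have hshift : ∑ x ∈ range N, g (x + 1) = ∑ x ∈ range N, g x := by
      cases N with
      | zero => rfl
      | succ N => rw [sum_range_succ, sum_range_succ' g, hg.eq]
    simpa only [add_assoc] using (ih (hg.add_const 1)).trans hshift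

theorem sum_range_eq_zero_of_map_add [Ring M] [NoZeroDivisors M] (hg : Periodic g N) {m : ℕ}
    {c : M} (hc : c ≠ 1) (hgm : ∀ x, g (x + m) = c * g x) : ∑ x ∈ range N, g x = 0 := by
  have h : c * ∑ x ∈ range N, g x = ∑ x ∈ range N, g x := by
    simp only [mul_sum, ← hgm, hg.sum_range_comp_add_nat]
  rwa [← sub_eq_zero, ← sub_one_mul, mul_eq_zero, sub_eq_zero, or_iff_right hc] at h

end Function.Periodic

def residueClassPowSum {R : Type*} [Semiring R] (ζ : R) (N m : ℕ) (a : ℤ) : R :=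
  ∑ x ∈ range N, if (m : ℤ) ∣ x - a then ζ ^ x else 0

def IsExactCover {ι : Type*} (a : ι → ℤ) (n : ι → ℕ) : Prop :=
  ∀ x : ℤ, ∃! i, (n i : ℤ) ∣ x - a i

theorem IsExactCover.sum_residueClassPowSum {R ι : Type*} [Semiring R] [Fintype ι]
    {a : ι → ℤ} {n : ι → ℕ} (hcover : IsExactCover a n) (ζ : R) (N : ℕ) :
    ∑ i, residueClassPowSum ζ N (n i) (a i) = ∑ x ∈ range N, ζ ^ x := by
  simp only [residueClassPowSum]
  rw [sum_comm]
  refine sum_congr rfl fun x _ => ?_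
  obtain ⟨i, hi, huniq⟩ := hcover x
  rw [Fintype.sum_eq_single i fun j hj => if_neg (mt (huniq j) hj), if_pos hi]

theorem sum_range_pow_eq_zero {R : Type*} [Ring R] [NoZeroDivisors R] {ζ : R} {N : ℕ}
    (hN : ζ ^ N = 1) (hζ : ζ ≠ 1) : ∑ x ∈ range N, ζ ^ x = 0 :=
  Function.Periodic.sum_range_eq_zero_of_map_add (m := 1) (fun x => by rw [pow_add, hN, mul_one])
    hζ fun x => pow_succ' ζ x

theorem residueClassPowSum_eq_zero {R : Type*} [Ring R] [NoZeroDivisors R] {ζ : R} {N m : ℕ}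
    (hN : ζ ^ N = 1) (hmN : m ∣ N) (hm : ζ ^ m ≠ 1) (a : ℤ) :
    residueClassPowSum ζ N m a = 0 := by
  refine Function.Periodic.sum_range_eq_zero_of_map_add (m := m) (fun x => ?_) hm fun x => ?_
  · simp only [Nat.cast_add, add_sub_right_comm _ (N : ℤ), pow_add, hN, mul_one,
      dvd_add_left (Int.natCast_dvd_natCast.mpr hmN)]
  · simp only [Nat.cast_add, add_sub_right_comm _ (m : ℤ), dvd_add_self_right, pow_add]
    split_ifs <;> simp [(Commute.pow_pow_self ζ x m).eq]

theorem residueClassPowSum_ne_zero {K : Type*} [Field K] [CharZero K] {ζ : K} {N m : ℕ}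
    (hm : ζ ^ m = 1) (hm0 : 0 < m) (hmN : m ∣ N) (hN : 0 < N) (a : ℤ) :
    residueClassPowSum ζ N m a ≠ 0 := by
  have hζ : ζ ≠ 0 := by rintro rfl; simp [hm0.ne'] at hm
  have hclass : ∀ x : ℕ, (m : ℤ) ∣ x - a → ζ ^ x = ζ ^ a := by
    rintro x ⟨t, ht⟩
    rw [← zpow_natCast, eq_add_of_sub_eq' ht, zpow_add₀ hζ, zpow_mul, zpow_natCast, hm, one_zpow,
      mul_one]
  have hm0' : (0 : ℤ) < m := by exact_mod_cast hm0
  have hS : ((range N).filter fun x : ℕ => (m : ℤ) ∣ x - a).Nonempty := by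
    have hrep : ((Int.toNat (a % m) : ℕ) : ℤ) = a % m :=
      Int.toNat_of_nonneg (Int.emod_nonneg a hm0'.ne')
    refine ⟨Int.toNat (a % m), mem_filter.mpr ⟨mem_range.mpr ?_, ?_⟩⟩
    · have := Int.emod_lt_of_pos a hm0'
      have := Nat.le_of_dvd hN hmN
      omega
    · rw [hrep]
      exact Int.dvd_emod_sub_self
  rw [residueClassPowSum, ← sum_filter, sum_congr rfl fun x hx => hclass x (mem_filter.mp hx).2,
    sum_const, nsmul_eq_mul]
  exact mul_ne_zero (Nat.cast_ne_zero.mpr hS.card_pos.ne') (zpow_ne_zero a hζ)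

theorem IsExactCover.exists_ne_le {ι : Type*} [Fintype ι] {a : ι → ℤ} {n : ι → ℕ}
    (hcover : IsExactCover a n) (hn : ∀ i, 0 < n i) {j : ι} (hj : 1 < n j) :
    ∃ i ≠ j, n j ≤ n i := by
  by_contra! hlt
  obtain ⟨ζ, hζ⟩ : ∃ ζ : ℂ, IsPrimitiveRoot ζ (n j) :=
    ⟨_, Complex.isPrimitiveRoot_exp _ (hn j).ne'⟩
  set N := ∏ i, n i
  have hdvd (i : ι) : n i ∣ N := dvd_prod_of_mem n (mem_univ i)
  have hζN : ζ ^ N = 1 := (hζ.pow_eq_one_iff_dvd N).mpr (hdvd j)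
  have hsum := hcover.sum_residueClassPowSum ζ N
  rw [sum_range_pow_eq_zero hζN (hζ.ne_one hj), Fintype.sum_eq_single j fun i hi =>
    residueClassPowSum_eq_zero hζN (hdvd i) (hζ.pow_ne_one_of_pos_of_lt (hn i).ne' (hlt i hi)) _]
    at hsum
  exact residueClassPowSum_ne_zero hζ.pow_eq_one (hn j) (hdvd j) (prod_pos fun i _ => hn i) _ hsum

/-- In any exact covering system `{a_i mod n_i}` of `ℤ` with `2 ≤ n 0 ≤ … ≤ n (k-1)`
and `k ≥ 2`, the largest modulus is repeated: `n (k-2) = n (k-1)`. -/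
theorem exact_cover_largest_modulus_repeated {k : ℕ} (hk : 2 ≤ k)
    (a : Fin k → ℤ) (n : Fin k → ℕ) (hn : ∀ i, 2 ≤ n i)
    (hmono : Monotone n)
    (hcover : ∀ x : ℤ, ∃! i : Fin k, (n i : ℤ) ∣ x - a i) :
    n ⟨k - 2, by omega⟩ = n ⟨k - 1, by omega⟩ := by
  obtain ⟨i, hi, hle⟩ := IsExactCover.exists_ne_le hcover (fun i => two_pos.trans_le (hn i))
    (j := ⟨k - 1, by omega⟩) (hn _)
  have hi' : i ≤ ⟨k - 2, by omega⟩ := by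
    have := Fin.val_ne_of_ne hi
    simp only [Fin.le_def] at this ⊢
    omega
  exact le_antisymm (hmono (Fin.mk_le_mk.mpr (by omega))) (hle.trans (hmono hi'))
end

section
/- Let {a_i mod n_i}_{i=1}^k be an exact covering system of ℤ with not all moduli equal. Then each modulus n_i occurs at least min{ G(n_i / gcd(n_i, n_j)) : n_j ≠ n_i } times, where G(n) = max{ p^r : p prime, r ≥ 0, p^r ∣ n }. -/
/-- `G n` is the largest prime power dividing `n` (with `G 1 = 1`). -/
def G (n : ℕ) : ℕ := max 1 ((n.divisors.filter IsPrimePow).sup id)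

/-!
Fix `N = n i` and let `f b` count the classes of modulus `N` containing `b`, so that
`∑_{0 ≤ b < N} f b` is the multiplicity of `N`. Sorting the residues modulo `L = ∏ n_j` that lie
over `b mod N` by the class covering them gives `f = ∑_{n_j ≠ N} q_j` with `q_j` of period
`gcd (N, n_j)`.

Let an integer-valued `f ≠ 0` of period `n` be a sum of rational functions `q_j` of periods
`g_j ∣ n`, with mass `F = ∑_{0 ≤ x < n} |f x|`; we show `G (n / g_j) ≤ F` for some `j`. If not,
there is a prime `p` with `F < p ^ v_p (n / g_j)` for some `j`; let `p ^ s` be the least such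
power. Every `q_j` with `F < p ^ v_p (n / g_j)` has period `n / p ^ s`. If `f` has that period
too, the `p ^ s` translates of a point where `f ≠ 0` give `F ≥ p ^ s`. Otherwise, with
`δ = n / p ^ s` and `p ^ t ∥ n`, the function `y ↦ f (z + p ^ t y + δ) - f (z + p ^ t y)` is, for
a suitable `z`, a nonzero sum of the remaining `q_j` on the `p`-free part of `n`, of mass at most
`F`, and induction on the number of summands finishes, since the remaining `j` have
`p ^ v_p (n / g_j) ≤ F`.
-/

open Finset Function

theorem G_le_iff {d m : ℕ} (hd : d ≠ 0) :
    G d ≤ m ↔ 1 ≤ m ∧ ∀ p, p.Prime → p ^ d.factorization p ≤ m := by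
  simp only [G, max_le_iff, Finset.sup_le_iff, mem_filter, Nat.mem_divisors, id, and_imp,
    isPrimePow_nat_iff]
  refine and_congr_right fun hm => ⟨fun h p hp => ?_, ?_⟩
  · rcases Nat.eq_zero_or_pos (d.factorization p) with h0 | hpos
    · simpa [h0] using hm
    · exact h _ (Nat.ordProj_dvd d p) hd ⟨p, _, hp, hpos, rfl⟩
  · rintro h _ hdvd - ⟨p, e, hp, -, rfl⟩
    exact (Nat.pow_le_pow_right hp.pos ((hp.pow_dvd_iff_le_factorization hd).1 hdvd)).trans (h p hp)

theorem Nat.div_ne_zero_of_dvd {a n : ℕ} (hn : n ≠ 0) (h : a ∣ n) : n / a ≠ 0 :=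
  fun h0 => hn (by rw [← Nat.div_mul_cancel h, h0, zero_mul])

theorem G_div_le_of_G_ordCompl_div_le {n g p m : ℕ} (hn : n ≠ 0) (hg : g ∣ n)
    (hpm : p ^ (n / g).factorization p ≤ m) (hG : G (ordCompl[p] n / ordCompl[p] g) ≤ m) :
    G (n / g) ≤ m := by
  have hg' := Nat.ordCompl_dvd_ordCompl_of_dvd hg p
  rw [G_le_iff (Nat.div_ne_zero_of_dvd (Nat.ordCompl_pos p hn).ne' hg')] at hG
  refine (G_le_iff (Nat.div_ne_zero_of_dvd hn hg)).2 ⟨hG.1, fun r hr => ?_⟩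
  rcases eq_or_ne r p with rfl | hrp
  · exact hpm
  · convert hG.2 r hr using 2
    rw [Nat.factorization_div hg, Nat.factorization_div hg', Nat.factorization_ordCompl,
      Nat.factorization_ordCompl]
    simp [Finsupp.erase_ne hrp]

theorem Nat.dvd_ordProj_mul_ordCompl {g n : ℕ} (hn : n ≠ 0) (hg : g ∣ n) (p : ℕ) :
    g ∣ ordProj[p] n * ordCompl[p] g := by
  conv_lhs => rw [← Nat.ordProj_mul_ordCompl_eq_self g p]
  exact mul_dvd_mul_right (Nat.ordProj_dvd_ordProj_of_dvd hn hg p) _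

theorem not_ordProj_dvd_div {p n s : ℕ} (hp : p.Prime) (hn : n ≠ 0) (hs : s ≠ 0)
    (hps : p ^ s ∣ n) : ¬ ordProj[p] n ∣ n / p ^ s := by
  intro h
  have := (Nat.dvd_div_iff_mul_dvd hps).1 h
  rw [← pow_add, hp.pow_dvd_iff_le_factorization hn] at this
  omega

theorem exists_prime_pow_of_lt_G {ι : Type*} {T : Finset ι} {n m : ℕ} (hn : n ≠ 0)
    {g : ι → ℕ} (hg : ∀ j ∈ T, g j ∣ n) (hm : 1 ≤ m) {j₀ : ι} (hj₀ : j₀ ∈ T)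
    (hlt : m < G (n / g j₀)) :
    ∃ p s, p.Prime ∧ m < p ^ s ∧ p ^ s ∣ n ∧ g j₀ ∣ n / p ^ s ∧
      ∀ j ∈ T, ¬ g j ∣ n / p ^ s → p ^ (n / g j).factorization p ≤ m := by
  obtain ⟨p, hp, hpm⟩ : ∃ p, p.Prime ∧ m < p ^ (n / g j₀).factorization p := by
    have := hlt.not_ge
    rw [G_le_iff (Nat.div_ne_zero_of_dvd hn (hg j₀ hj₀))] at this
    push Not at this
    exact this hm
  set e := fun j => (n / g j).factorization p
  set J := T.filter fun j => m < p ^ e j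
  obtain ⟨j₁, hj₁, hmin⟩ := J.exists_min_image e ⟨j₀, mem_filter.2 ⟨hj₀, hpm⟩⟩
  have hdvd : ∀ j ∈ J, g j ∣ n / p ^ e j₁ := fun j hj => by
    have hjT := (mem_filter.1 hj).1
    refine Nat.dvd_div_of_mul_dvd (mul_comm (g j) _ ▸ (Nat.dvd_div_iff_mul_dvd (hg j hjT)).1 ?_)
    exact (pow_dvd_pow p (hmin j hj)).trans (Nat.ordProj_dvd _ p)
  refine ⟨p, e j₁, hp, (mem_filter.1 hj₁).2, ?_, hdvd j₀ (mem_filter.2 ⟨hj₀, hpm⟩),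
    fun j hj hndvd => ?_⟩
  · exact (Nat.ordProj_dvd _ p).trans (Nat.div_dvd_of_dvd (hg j₁ (mem_filter.1 hj₁).1))
  · by_contra h
    exact hndvd (hdvd j (mem_filter.2 ⟨hj, not_le.1 h⟩))

theorem Function.Periodic.of_dvd {α : Type*} {f : ℤ → α} {c d : ℤ} (hf : Periodic f c)
    (h : c ∣ d) : Periodic f d := by
  obtain ⟨m, rfl⟩ := h
  simpa [mul_comm] using hf.int_mul m

theorem Function.Periodic.map_emod {α : Type*} {f : ℤ → α} {n : ℤ} (hf : Periodic f n) (x : ℤ) :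
    f (x % n) = f x := by
  rw [Int.emod_def, mul_comm]
  exact hf.sub_int_mul_eq _

section PeriodicSum

variable {ι : Type*} {T : Finset ι} {q : ι → ℤ → ℚ} {f : ℤ → ℤ}

theorem periodic_of_intCast_eq_sum {n : ℕ} {g : ι → ℕ} (hg : ∀ j ∈ T, g j ∣ n)
    (hq : ∀ j ∈ T, Periodic (q j) (g j)) (hfq : ∀ x, (f x : ℚ) = ∑ j ∈ T, q j x) :
    Periodic f n := fun x => by
  have hq' : ∀ j ∈ T, Periodic (q j) n := fun j hj =>
    (hq j hj).of_dvd (Int.natCast_dvd_natCast.2 (hg j hj))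
  exact_mod_cast (hfq (x + n)).trans ((sum_congr rfl fun j hj => hq' j hj x).trans (hfq x).symm)

theorem intCast_sub_eq_sum_filter {P : ι → Prop} [DecidablePred P] {δ : ℤ}
    (hfq : ∀ x, (f x : ℚ) = ∑ j ∈ T, q j x) (hδ : ∀ j ∈ T, P j → Periodic (q j) δ) (x : ℤ) :
    ((f (x + δ) - f x : ℤ) : ℚ) = ∑ j ∈ T.filter (fun j => ¬ P j), (q j (x + δ) - q j x) := by
  rw [Int.cast_sub, hfq, hfq, ← sum_sub_distrib, ← sum_filter_add_sum_filter_not T P,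
    sum_eq_zero fun j hj => ?_, zero_add]
  obtain ⟨hjT, hj⟩ := mem_filter.1 hj
  rw [hδ j hjT hj x, sub_self]

end PeriodicSum

theorem Function.Periodic.sub_comp_add_mul {α : Type*} [AddGroup α] {φ : ℤ → α} {c : ℤ}
    (hφ : Periodic φ c) {a h : ℤ} (hc : c ∣ a * h) (z δ : ℤ) :
    Periodic (fun y => φ (z + a * y + δ) - φ (z + a * y)) h := fun y => by
  have hφ' := hφ.of_dvd hc
  simp only [mul_add, ← add_assoc, add_right_comm _ (a * h) δ]
  rw [hφ', hφ']

noncomputable def natAbsSum (f : ℤ → ℤ) (n : ℕ) : ℕ := ∑ x ∈ Ico (0 : ℤ) n, (f x).natAbs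

theorem sum_natAbs_comp_le_natAbsSum {α : Type*} {f : ℤ → ℤ} {n : ℕ} (hf : Periodic f n)
    (hn : n ≠ 0) {φ : α → ℤ} {S : Finset α}
    (hS : ∀ u ∈ S, ∀ u' ∈ S, φ u ≡ φ u' [ZMOD n] → u = u') :
    ∑ u ∈ S, (f (φ u)).natAbs ≤ natAbsSum f n := by
  have hn' : (0 : ℤ) < n := by exact_mod_cast Nat.pos_of_ne_zero hn
  calc ∑ u ∈ S, (f (φ u)).natAbs = ∑ u ∈ S, (f (φ u % n)).natAbs := by
        simp only [hf.map_emod]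
    _ = ∑ x ∈ S.image (fun u => φ u % n), (f x).natAbs :=
        (sum_image (f := fun x => (f x).natAbs) hS).symm
    _ ≤ natAbsSum f n := by
        refine sum_le_sum_of_subset fun x hx => ?_
        obtain ⟨u, -, rfl⟩ := mem_image.1 hx
        exact mem_Ico.2 ⟨Int.emod_nonneg _ hn'.ne', Int.emod_lt_of_pos _ hn'⟩

theorem le_natAbsSum_of_periodic {f : ℤ → ℤ} {n e : ℕ} (hn : n ≠ 0) (he : e ∣ n)
    (hf : Periodic f (n / e : ℕ)) (hf0 : f ≠ 0) : e ≤ natAbsSum f n := by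
  obtain ⟨x₀, hx₀⟩ := Function.ne_iff.1 hf0
  set d := n / e
  have hnd : n = e * d := (Nat.mul_div_cancel' he).symm
  have hd : d ≠ 0 := Nat.div_ne_zero_of_dvd hn he
  calc e = ∑ _u ∈ range e, 1 := by simp
    _ ≤ ∑ u ∈ range e, (f (x₀ + u * d)).natAbs := by
        refine sum_le_sum fun u _ => ?_
        rw [hf.nat_mul u x₀]
        exact Int.natAbs_pos.2 hx₀
    _ ≤ natAbsSum f n := by
        refine sum_natAbs_comp_le_natAbsSum (hf.of_dvd ?_) hn fun u hu u' hu' h => ?_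
        · exact Int.natCast_dvd_natCast.2 (Nat.div_dvd_of_dvd he)
        · rw [hnd, Nat.cast_mul] at h
          have := (h.add_left_cancel' x₀).mul_right_cancel' (Int.natCast_ne_zero.2 hd)
          rw [Int.natCast_modEq_iff] at this
          exact Nat.ModEq.eq_of_lt_of_lt this (mem_range.1 hu) (mem_range.1 hu')

theorem natAbsSum_sub_le {f : ℤ → ℤ} {a b n : ℕ} (hab : a * b = n) (hf : Periodic f n)
    (hn : n ≠ 0) {δ : ℤ} (hδ : ¬ (a : ℤ) ∣ δ) (z : ℤ) :
    natAbsSum (fun y => f (z + a * y + δ) - f (z + a * y)) b ≤ natAbsSum f n := by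
  subst hab
  have hδ0 : δ ≠ 0 := by rintro rfl; exact hδ (dvd_zero _)
  calc natAbsSum (fun y => f (z + a * y + δ) - f (z + a * y)) b
      ≤ ∑ y ∈ Ico (0 : ℤ) b, ((f (z + a * y + δ)).natAbs + (f (z + a * y + 0)).natAbs) :=
        sum_le_sum fun y _ => by simpa using Int.natAbs_sub_le _ _
    _ = ∑ yc ∈ Ico (0 : ℤ) b ×ˢ {δ, 0}, (f (z + a * yc.1 + yc.2)).natAbs := by
        rw [sum_product]
        exact sum_congr rfl fun y _ =>
          (sum_pair (f := fun c => (f (z + a * y + c)).natAbs) hδ0).symm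
    _ ≤ natAbsSum f (a * b) := by
        refine sum_natAbs_comp_le_natAbsSum hf hn ?_
        rintro ⟨y, c⟩ hyc ⟨y', c'⟩ hyc' h
        simp only [mem_product, mem_Ico, mem_insert, mem_singleton] at hyc hyc' h
        rw [Nat.cast_mul] at h
        have hc : c = c' := by
          have hdvd := (h.of_mul_right b).dvd
          rw [show z + a * y' + c' - (z + a * y + c) = a * (y' - y) + (c' - c) by ring,
            Int.dvd_add_right (dvd_mul_right _ _)] at hdvd
          rcases hyc.2 with rfl | rfl <;> rcases hyc'.2 with rfl | rfl <;> simp_all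
        subst hc
        have hy := ((h.add_right_cancel' c).add_left_cancel' z).mul_left_cancel'
          (Int.natCast_ne_zero.2 (left_ne_zero_of_mul hn))
        rw [Int.ModEq, Int.emod_eq_of_lt hyc.1.1 hyc.1.2, Int.emod_eq_of_lt hyc'.1.1 hyc'.1.2] at hy
        rw [hy]

theorem exists_G_div_le_natAbsSum {ι : Type*} (T : Finset ι) {n : ℕ} (hn : n ≠ 0)
    {g : ι → ℕ} (hg : ∀ j ∈ T, g j ∣ n) {q : ι → ℤ → ℚ} (hq : ∀ j ∈ T, Periodic (q j) (g j))
    {f : ℤ → ℤ} (hfq : ∀ x, (f x : ℚ) = ∑ j ∈ T, q j x) (hf0 : f ≠ 0) :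
    ∃ j ∈ T, G (n / g j) ≤ natAbsSum f n := by
  induction T using Finset.strongInduction generalizing n g q f with
  | H T ih =>
  by_contra! hlt
  have hf : Periodic f n := periodic_of_intCast_eq_sum hg hq hfq
  have hF : 1 ≤ natAbsSum f n := le_natAbsSum_of_periodic hn (one_dvd n) (by simpa using hf) hf0
  obtain ⟨j₀, hj₀⟩ : T.Nonempty :=
    nonempty_iff_ne_empty.2 fun hT => hf0 (funext fun x => by simpa [hT] using hfq x)
  obtain ⟨p, s, hp, hps, hpsn, hj₀s, hpow⟩ :=
    exists_prime_pow_of_lt_G hn hg hF hj₀ (hlt j₀ hj₀)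
  set δ : ℤ := ((n / p ^ s : ℕ) : ℤ)
  by_cases hfδ : Periodic f δ
  · exact hps.not_ge (le_natAbsSum_of_periodic hn hpsn hfδ hf0)
  obtain ⟨z, hz⟩ := not_forall.1 hfδ
  set a := ordProj[p] n
  set T' := T.filter fun j => ¬ g j ∣ n / p ^ s
  have hs : s ≠ 0 := by rintro rfl; rw [pow_zero] at hps; omega
  obtain ⟨j, hjT', hj⟩ := ih T' (filter_ssubset.2 ⟨j₀, hj₀, not_not.2 hj₀s⟩)
    (Nat.ordCompl_pos p hn).ne' (g := fun j => ordCompl[p] (g j))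
    (q := fun j y => q j (z + a * y + δ) - q j (z + a * y))
    (f := fun y => f (z + a * y + δ) - f (z + a * y))
    (fun j hj => Nat.ordCompl_dvd_ordCompl_of_dvd (hg j (mem_filter.1 hj).1) p)
    (fun j hj => (hq j (mem_filter.1 hj).1).sub_comp_add_mul (Int.natCast_dvd_natCast.2
      (Nat.dvd_ordProj_mul_ordCompl hn (hg j (mem_filter.1 hj).1) p)) z δ)
    (fun y => intCast_sub_eq_sum_filter hfq (fun j hj hdvd => (hq j hj).of_dvd
        (Int.natCast_dvd_natCast.2 hdvd)) _)
    (fun hw => hz (by simpa [sub_eq_zero] using congrFun hw 0))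
  obtain ⟨hjT, hjs⟩ := mem_filter.1 hjT'
  refine (hlt j hjT).not_ge (G_div_le_of_G_ordCompl_div_le hn (hg j hjT) (hpow j hjT hjs)
    (hj.trans (natAbsSum_sub_le (Nat.ordProj_mul_ordCompl_eq_self n p) hf hn
      (Int.natCast_dvd_natCast.not.2 (not_ordProj_dvd_div hp hn hs hpsn)) z)))

def fiberCard (L N : ℕ) [NeZero L] (P : ZMod L → Prop) [DecidablePred P] (b : ℤ) : ℕ :=
  #{x : ZMod L | (ZMod.cast x : ZMod N) = b ∧ P x}

section Counting

variable {L N : ℕ} [NeZero L]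

theorem fiberCard_periodic_modulus (P : ZMod L → Prop) [DecidablePred P] :
    Periodic (fiberCard L N P) N := fun b => by
  simp [fiberCard]

theorem fiberCard_periodic (hNL : N ∣ L) {P : ZMod L → Prop} [DecidablePred P] {s : ℤ}
    (hP : ∀ x, P (x + s) ↔ P x) : Periodic (fiberCard L N P) s := fun b => by
  refine card_nbij' (· - (s : ZMod L)) (· + (s : ZMod L)) ?_ ?_ (fun _ _ => by simp)
    (fun _ _ => by simp)
  · intro x hx
    simp only [coe_filter, mem_univ, true_and, Set.mem_ofPred_eq] at hx ⊢
    rw [ZMod.cast_sub hNL, ZMod.cast_intCast hNL, hx.1, ← hP, sub_add_cancel]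
    exact ⟨by push_cast; ring, hx.2⟩
  · intro x hx
    simp only [coe_filter, mem_univ, true_and, Set.mem_ofPred_eq] at hx ⊢
    rw [ZMod.cast_add hNL, ZMod.cast_intCast hNL, hx.1, hP]
    exact ⟨by push_cast; ring, hx.2⟩

theorem fiberCard_pos (hNL : N ∣ L) (b : ℤ) : 0 < fiberCard L N (fun _ => True) b :=
  card_pos.2 ⟨b, by simp [ZMod.cast_intCast hNL]⟩

theorem fiberCard_periodic_gcd (hNL : N ∣ L) {m : ℕ} (hmL : m ∣ L) (c : ℤ) :
    Periodic (fiberCard L N fun x => (ZMod.cast x : ZMod m) = c) (N.gcd m) := by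
  have hshift : Periodic (fiberCard L N fun x => (ZMod.cast x : ZMod m) = c) (m * N.gcdB m) :=
    fiberCard_periodic hNL fun x => by
      rw [ZMod.cast_add hmL, ZMod.cast_intCast hmL]
      simp
  rw [Nat.gcd_eq_gcd_ab]
  exact ((fiberCard_periodic_modulus _).of_dvd (dvd_mul_right _ _)).add_period hshift

theorem fiberCard_cast_eq (c b : ℤ) :
    fiberCard L N (fun x => (ZMod.cast x : ZMod N) = c) b =
      if (c : ZMod N) = b then fiberCard L N (fun _ => True) b else 0 := by
  unfold fiberCard
  split_ifs with h
  · simp only [h, and_self, and_true]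
  · refine card_eq_zero.2 (filter_eq_empty_iff.2 fun x _ hx => h (hx.2.symm.trans hx.1))

theorem fiberCard_eq_sum {ι : Type*} [Fintype ι] {P : ι → ZMod L → Prop}
    [∀ j, DecidablePred (P j)] (hP : ∀ x, ∃! j, P j x) (b : ℤ) :
    fiberCard L N (fun _ => True) b = ∑ j, fiberCard L N (P j) b := by
  classical
  choose c hc hu using hP
  rw [fiberCard, card_eq_sum_card_fiberwise (f := c) (t := univ) fun _ _ => mem_coe.2 (mem_univ _)]
  refine sum_congr rfl fun j _ => ?_
  rw [filter_filter, fiberCard]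
  exact congrArg card (filter_congr fun x _ =>
    ⟨fun h => ⟨h.1.1, h.2 ▸ hc x⟩, fun h => ⟨⟨h.1, trivial⟩, (hu x j h.2).symm⟩⟩)

end Counting

theorem existsUnique_cast_eq_of_exactCover {ι : Type*} {a : ι → ℤ} {n : ι → ℕ}
    (hcover : ∀ x : ℤ, ∃! j, (n j : ℤ) ∣ x - a j) {L : ℕ} [NeZero L] (x : ZMod L) :
    ∃! j, (ZMod.cast x : ZMod (n j)) = a j := by
  have h : ∀ j, (ZMod.cast x : ZMod (n j)) = a j ↔ (n j : ℤ) ∣ x.val - a j := fun j => by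
    rw [← ZMod.natCast_val, ← Int.cast_natCast, eq_comm, ZMod.intCast_eq_intCast_iff_dvd_sub]
  exact (existsUnique_congr h).2 (hcover x.val)

theorem intCast_card_eq_one_sub_sum_div {ι : Type*} [Fintype ι] {a : ι → ℤ} {n : ι → ℕ}
    {L N : ℕ} [NeZero L] (hNL : N ∣ L)
    (hcov : ∀ x : ZMod L, ∃! j, (ZMod.cast x : ZMod (n j)) = a j) (b : ℤ) :
    (#{j | n j = N ∧ (a j : ZMod N) = b} : ℚ) =
      1 - ∑ j ∈ univ.filter (fun j => n j ≠ N),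
        (fiberCard L N (fun x => (ZMod.cast x : ZMod (n j)) = a j) b : ℚ) /
          fiberCard L N (fun _ => True) b := by
  classical
  have hsame : ∀ j ∈ univ.filter (fun j => n j = N),
      fiberCard L N (fun x => (ZMod.cast x : ZMod (n j)) = a j) b =
        if (a j : ZMod N) = b then fiberCard L N (fun _ => True) b else 0 := fun j hj => by
    rw [(mem_filter.1 hj).2]
    exact fiberCard_cast_eq _ _
  have h := fiberCard_eq_sum (N := N) hcov b
  rw [← sum_filter_add_sum_filter_not univ (fun j => n j = N), sum_congr rfl hsame, sum_ite,
    sum_const_zero, add_zero, sum_const, smul_eq_mul, filter_filter] at h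
  have hfib : (fiberCard L N (fun _ => True) b : ℚ) ≠ 0 :=
    Nat.cast_ne_zero.2 (fiberCard_pos hNL b).ne'
  rw [eq_sub_iff_add_eq, ← mul_div_cancel_right₀ (#{j | n j = N ∧ (a j : ZMod N) = b} : ℚ) hfib,
    ← sum_div, ← add_div, div_eq_one_iff_eq hfib]
  exact_mod_cast h.symm

theorem natAbsSum_card_filter_intCast_eq {ι : Type*} (S : Finset ι) (v : ι → ℤ) {N : ℕ}
    (hN : N ≠ 0) : natAbsSum (fun b => (#{j ∈ S | (v j : ZMod N) = b} : ℤ)) N = #S := by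
  have hN' : (0 : ℤ) < N := by exact_mod_cast Nat.pos_of_ne_zero hN
  rw [card_eq_sum_card_fiberwise (f := fun j => v j % N) (t := Ico 0 N) fun j _ =>
    mem_Ico.2 ⟨Int.emod_nonneg _ hN'.ne', Int.emod_lt_of_pos _ hN'⟩]
  refine sum_congr rfl fun b hb => ?_
  rw [Int.natAbs_natCast]
  refine congrArg card (filter_congr fun j _ => ?_)
  rw [ZMod.intCast_eq_intCast_iff', Int.emod_eq_of_lt (mem_Ico.1 hb).1 (mem_Ico.1 hb).2]

theorem exists_G_div_gcd_le_card {ι : Type*} [Fintype ι] (a : ι → ℤ) (n : ι → ℕ)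
    (hn : ∀ j, n j ≠ 0) (hcover : ∀ x : ℤ, ∃! j, (n j : ℤ) ∣ x - a j) (i : ι)
    (hi : ∃ j, n j ≠ n i) : ∃ j, n j ≠ n i ∧ G (n i / (n i).gcd (n j)) ≤ #{j | n j = n i} := by
  classical
  set L := ∏ j, n j
  have : NeZero L := ⟨prod_ne_zero_iff.2 fun j _ => hn j⟩
  have hL : ∀ j, n j ∣ L := fun j => dvd_prod_of_mem n (mem_univ j)
  set T := univ.filter fun j => n j ≠ n i
  have hT : (#T : ℚ) ≠ 0 := by
    obtain ⟨j, hj⟩ := hi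
    exact Nat.cast_ne_zero.2 (card_ne_zero_of_mem (mem_filter.2 ⟨mem_univ j, hj⟩))
  set f : ℤ → ℤ := fun b => #{j | n j = n i ∧ (a j : ZMod (n i)) = b}
  have hf0 : f ≠ 0 := fun hf => by
    have := congrFun hf (a i)
    simp only [f, Pi.zero_apply, Nat.cast_eq_zero, card_eq_zero, filter_eq_empty_iff] at this
    exact this (mem_univ i) ⟨rfl, rfl⟩
  have hfib : Periodic (fiberCard L (n i) fun _ => True) 1 :=
    fiberCard_periodic (hL i) fun _ => Iff.rfl
  obtain ⟨j, hjT, hj⟩ := exists_G_div_le_natAbsSum T (hn i) (g := fun j => (n i).gcd (n j))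
    (q := fun j b => 1 / (#T : ℚ) -
      fiberCard L (n i) (fun x => (ZMod.cast x : ZMod (n j)) = a j) b /
        fiberCard L (n i) (fun _ => True) b)
    (fun j _ => Nat.gcd_dvd_left _ _)
    (fun j _ b => by
      simp only [fiberCard_periodic_gcd (hL i) (hL j) (a j) b, hfib.of_dvd (one_dvd _) b])
    (fun b => by
      rw [Int.cast_natCast, intCast_card_eq_one_sub_sum_div (hL i)
        (existsUnique_cast_eq_of_exactCover hcover), sum_sub_distrib, sum_const, nsmul_eq_mul,
        mul_one_div_cancel hT])
    hf0
  refine ⟨j, (mem_filter.1 hjT).2, hj.trans_eq ?_⟩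
  simpa only [filter_filter] using
    natAbsSum_card_filter_intCast_eq (univ.filter fun j => n j = n i) a (hn i)

/-- In an exact covering system of `ℤ` with not all moduli equal, each modulus
`n i` occurs at least `min { G (n i / gcd (n i) (n j)) : n j ≠ n i }` times. -/
theorem exact_cover_modulus_repeats {k : ℕ}
    (a : Fin k → ℤ) (n : Fin k → ℕ) (hn : ∀ i, 2 ≤ n i)
    (hcover : ∀ x : ℤ, ∃! i : Fin k, (n i : ℤ) ∣ x - a i)
    (hne : ∃ i j : Fin k, n i ≠ n j) :
    ∀ i : Fin k,
      sInf {m : ℕ | ∃ j : Fin k, n j ≠ n i ∧ m = G (n i / Nat.gcd (n i) (n j))} ≤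
        Nat.card {j : Fin k // n j = n i} := by
  intro i
  have hi : ∃ j, n j ≠ n i := by
    by_contra! h
    obtain ⟨i₀, j₀, hij⟩ := hne
    exact hij ((h i₀).trans (h j₀).symm)
  obtain ⟨j, hj, hG⟩ :=
    exists_G_div_gcd_le_card a n (fun j => by have := hn j; omega) hcover i hi
  rw [Nat.card_eq_fintype_card, Fintype.card_subtype]
  refine (Nat.sInf_le ?_).trans hG
  exact ⟨j, hj, rfl⟩
end

section
/- Let τ be a partition of the lattice parallelotope P(n; b) = B_1 × … × B_n (where B_i = {0,…,b_i−1}, b_i ≥ 2) into cells, with at least two cells, and let E ∈ τ be subset minimal. Put b = min{ b_i : i ∉ I(E) }. Then τ contains at least b cells with index equal to I(E). -/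
open Finset

section Aux

variable {n : ℕ} {b : Fin n → ℕ} {ι : Type*} [Fintype ι]

omit [Fintype ι] in
/-- Key counting lemma (abstract form of the BFF argument, by induction on `K`):
if a nonempty finite family of points (injective on coordinates in `K`) satisfies
the vanishing identity `∑ j, ∏_{i ∈ K} (b i · [x i = u j i] - 1) = 0` for all `x`,
then its cardinality is at least `b i` for some `i ∈ K`. -/
private lemma lemB (hb : ∀ i, 2 ≤ b i) (u : ι → ∀ i, Fin (b i)) (K : Finset (Fin n)) :
    ∀ A : Finset ι, A.Nonempty →
    (∀ j ∈ A, ∀ k ∈ A, (∀ i ∈ K, u j i = u k i) → j = k) →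
    (∀ x : ∀ i, Fin (b i),
      ∑ j ∈ A, ∏ i ∈ K, ((b i : ℤ) * (if x i = u j i then 1 else 0) - 1) = 0) →
    ∃ i ∈ K, b i ≤ A.card := by
  classical
  induction K using Finset.induction_on with
  | empty =>
      intro A hA _ hid
      exfalso
      have hx : ∀ i, Fin (b i) := fun i => ⟨0, by have := hb i; omega⟩
      have h := hid hx
      simp only [Finset.prod_empty, Finset.sum_const, nsmul_eq_mul, mul_one] at h
      have hc : A.card = 0 := by exact_mod_cast h
      have := hA.card_pos
      omega
  | @insert i₀ K hi₀ IH =>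
      intro A hA hinj hid
      by_cases hall : ∀ t : Fin (b i₀), ∃ j ∈ A, u j i₀ = t
      · refine ⟨i₀, mem_insert_self _ _, ?_⟩
        choose f hf1 hf2 using hall
        have hcard : (univ : Finset (Fin (b i₀))).card ≤ A.card :=
          Finset.card_le_card_of_injOn f (fun t _ => hf1 t)
            (fun t _ t' _ h => by rw [← hf2 t, h, hf2 t'])
        simpa using hcard
      · push_neg at hall
        obtain ⟨t', ht'⟩ := hall
        have hsum : ∀ x : ∀ i, Fin (b i),
            ∑ j ∈ A, ∏ i ∈ K, ((b i : ℤ) * (if x i = u j i then 1 else 0) - 1) = 0 := by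
          intro x
          have h0 := hid (Function.update x i₀ t')
          have key : ∀ j ∈ A,
              ∏ i ∈ insert i₀ K,
                ((b i : ℤ) * (if Function.update x i₀ t' i = u j i then 1 else 0) - 1)
              = -(∏ i ∈ K, ((b i : ℤ) * (if x i = u j i then 1 else 0) - 1)) := by
            intro j hj
            rw [Finset.prod_insert hi₀]
            have h1 : Function.update x i₀ t' i₀ = t' := Function.update_self _ _ _
            rw [h1, if_neg (fun h => ht' j hj h.symm)]
            have h2 : ∏ i ∈ K,
                ((b i : ℤ) * (if Function.update x i₀ t' i = u j i then 1 else 0) - 1)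
                = ∏ i ∈ K, ((b i : ℤ) * (if x i = u j i then 1 else 0) - 1) :=
              Finset.prod_congr rfl fun i hi => by
                rw [Function.update_of_ne (by rintro rfl; exact hi₀ hi)]
            rw [h2]; ring
          rw [Finset.sum_congr rfl key] at h0
          simpa using h0
        obtain ⟨j₀, hj₀⟩ := hA
        have hb0 : (b i₀ : ℤ) ≠ 0 := by
          have := hb i₀; exact_mod_cast (by omega : b i₀ ≠ 0)
        have hid' : ∀ x : ∀ i, Fin (b i),
            ∑ j ∈ A.filter (fun j => u j₀ i₀ = u j i₀),
              ∏ i ∈ K, ((b i : ℤ) * (if x i = u j i then 1 else 0) - 1) = 0 := by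
          intro x
          have h0 := hid (Function.update x i₀ (u j₀ i₀))
          have key : ∀ j ∈ A,
              ∏ i ∈ insert i₀ K,
                ((b i : ℤ) * (if Function.update x i₀ (u j₀ i₀) i = u j i then 1 else 0) - 1)
              = (b i₀ : ℤ) * (if u j₀ i₀ = u j i₀
                    then ∏ i ∈ K, ((b i : ℤ) * (if x i = u j i then 1 else 0) - 1) else 0)
                - ∏ i ∈ K, ((b i : ℤ) * (if x i = u j i then 1 else 0) - 1) := by
            intro j hj
            rw [Finset.prod_insert hi₀]
            have h1 : Function.update x i₀ (u j₀ i₀) i₀ = u j₀ i₀ := Function.update_self _ _ _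
            have h2 : ∏ i ∈ K,
                ((b i : ℤ) * (if Function.update x i₀ (u j₀ i₀) i = u j i then 1 else 0) - 1)
                = ∏ i ∈ K, ((b i : ℤ) * (if x i = u j i then 1 else 0) - 1) :=
              Finset.prod_congr rfl fun i hi => by
                rw [Function.update_of_ne (by rintro rfl; exact hi₀ hi)]
            rw [h1, h2]
            by_cases hc : u j₀ i₀ = u j i₀
            · rw [if_pos hc, if_pos hc]; ring
            · rw [if_neg hc, if_neg hc]; ring
          rw [Finset.sum_congr rfl key, Finset.sum_sub_distrib, hsum x, sub_zero,
            ← Finset.mul_sum, ← Finset.sum_filter] at h0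
          exact (mul_eq_zero.1 h0).resolve_left hb0
        have hinj' : ∀ j ∈ A.filter (fun j => u j₀ i₀ = u j i₀),
            ∀ k ∈ A.filter (fun j => u j₀ i₀ = u j i₀),
            (∀ i ∈ K, u j i = u k i) → j = k := by
          intro j hj k hk h
          have hjA := Finset.mem_filter.1 hj
          have hkA := Finset.mem_filter.1 hk
          refine hinj j hjA.1 k hkA.1 (fun i hi => ?_)
          rcases Finset.mem_insert.1 hi with rfl | hi
          · rw [← hjA.2, hkA.2]
          · exact h i hi
        obtain ⟨i, hiK, hle⟩ := IH (A.filter (fun j => u j₀ i₀ = u j i₀))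
          ⟨j₀, Finset.mem_filter.2 ⟨hj₀, rfl⟩⟩ hinj' hid'
        exact ⟨i, mem_insert_of_mem hiK, hle.trans (Finset.card_filter_le _ _)⟩



open scoped Classical in
/-- The discrete "difference operator" identity for a cell partition: applying
`∏_{i ∈ K} (b i · δ_{x i} - Σ)` to `∑ cells = 1` yields `0` for `K ≠ ∅`. -/
private lemma claimA (C : ι → Set (∀ i, Fin (b i))) (Idx : ι → Finset (Fin n))
    (u : ι → ∀ i, Fin (b i))
    (hcell : ∀ j, C j = {c | ∀ i ∉ Idx j, c i = u j i})
    (hpart : ∀ x : ∀ i, Fin (b i), ∃! j : ι, x ∈ C j)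
    (K : Finset (Fin n)) :
    ∀ x : ∀ i, Fin (b i),
      (∑ j : ι, if Disjoint (Idx j) K ∧ ∀ i, i ∉ Idx j → i ∉ K → x i = u j i
        then ∏ i ∈ K, ((b i : ℤ) * (if x i = u j i then 1 else 0) - 1) else 0)
      = if K = ∅ then 1 else 0 := by
  induction K using Finset.induction_on with
  | empty =>
      intro x
      rw [if_pos rfl]
      obtain ⟨j₀, hj₀, huni⟩ := hpart x
      simp only [hcell, Set.mem_setOf_eq] at hj₀ huni
      have hiff : ∀ j : ι,
          ((Disjoint (Idx j) (∅ : Finset (Fin n)) ∧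
            ∀ i, i ∉ Idx j → i ∉ (∅ : Finset (Fin n)) → x i = u j i) ↔ j = j₀) := by
        intro j
        constructor
        · rintro ⟨-, h⟩
          exact huni j (fun i hi => h i hi (Finset.notMem_empty i))
        · rintro rfl
          exact ⟨Finset.disjoint_empty_right _, fun i hi _ => hj₀ i hi⟩
      calc (∑ j : ι, if Disjoint (Idx j) (∅ : Finset (Fin n)) ∧
              ∀ i, i ∉ Idx j → i ∉ (∅ : Finset (Fin n)) → x i = u j i
            then ∏ i ∈ (∅ : Finset (Fin n)),
              ((b i : ℤ) * (if x i = u j i then 1 else 0) - 1) else 0)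
          = ∑ j : ι, if j = j₀ then (1 : ℤ) else 0 := by
            refine Finset.sum_congr rfl fun j _ => ?_
            rw [Finset.prod_empty]
            by_cases h : j = j₀
            · rw [if_pos ((hiff j).2 h), if_pos h]
            · rw [if_neg (fun hc => h ((hiff j).1 hc)), if_neg h]
        _ = 1 := by simp
  | @insert i₀ K hi₀ IH =>
      intro x
      rw [if_neg (Finset.insert_ne_empty i₀ K)]
      have key : ∀ j : ι,
          (if Disjoint (Idx j) (insert i₀ K) ∧
              (∀ i, i ∉ Idx j → i ∉ insert i₀ K → x i = u j i)
            then ∏ i ∈ insert i₀ K, ((b i : ℤ) * (if x i = u j i then 1 else 0) - 1) else 0)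
          = (b i₀ : ℤ) *
              (if Disjoint (Idx j) K ∧ (∀ i, i ∉ Idx j → i ∉ K → x i = u j i)
                then ∏ i ∈ K, ((b i : ℤ) * (if x i = u j i then 1 else 0) - 1) else 0)
            - ∑ t : Fin (b i₀),
              (if Disjoint (Idx j) K ∧
                  (∀ i, i ∉ Idx j → i ∉ K → Function.update x i₀ t i = u j i)
                then ∏ i ∈ K,
                  ((b i : ℤ) * (if Function.update x i₀ t i = u j i then 1 else 0) - 1)
                else 0) := by
        intro j
        have hprodK : ∀ t, (∏ i ∈ K,
            ((b i : ℤ) * (if Function.update x i₀ t i = u j i then 1 else 0) - 1))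
            = ∏ i ∈ K, ((b i : ℤ) * (if x i = u j i then 1 else 0) - 1) := fun t =>
          Finset.prod_congr rfl fun i hi => by
            rw [Function.update_of_ne (by rintro rfl; exact hi₀ hi)]
        by_cases hmem : i₀ ∈ Idx j
        · rw [if_neg (fun hc =>
            (Finset.disjoint_right.1 hc.1 (mem_insert_self i₀ K)) hmem)]
          have hsame : ∀ t : Fin (b i₀),
              (if Disjoint (Idx j) K ∧
                  (∀ i, i ∉ Idx j → i ∉ K → Function.update x i₀ t i = u j i)
                then ∏ i ∈ K,
                  ((b i : ℤ) * (if Function.update x i₀ t i = u j i then 1 else 0) - 1)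
                else 0)
              = (if Disjoint (Idx j) K ∧ (∀ i, i ∉ Idx j → i ∉ K → x i = u j i)
                  then ∏ i ∈ K, ((b i : ℤ) * (if x i = u j i then 1 else 0) - 1) else 0) := by
            intro t
            have hc : (∀ i, i ∉ Idx j → i ∉ K → Function.update x i₀ t i = u j i) ↔
                (∀ i, i ∉ Idx j → i ∉ K → x i = u j i) := by
              constructor <;> intro h i hi1 hi2 <;>
                have hne : i ≠ i₀ := by rintro rfl; exact hi1 hmem
              · rw [← h i hi1 hi2, Function.update_of_ne hne]
              · rw [Function.update_of_ne hne]; exact h i hi1 hi2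
            rw [hprodK t]
            by_cases hD : Disjoint (Idx j) K ∧ (∀ i, i ∉ Idx j → i ∉ K → x i = u j i)
            · rw [if_pos hD, if_pos ⟨hD.1, hc.2 hD.2⟩]
            · rw [if_neg hD, if_neg (fun hc2 => hD ⟨hc2.1, hc.1 hc2.2⟩)]
          rw [Finset.sum_congr rfl (fun t _ => hsame t)]
          simp [Finset.card_univ, mul_comm]
        · -- i₀ ∉ Idx j
          by_cases hDA : Disjoint (Idx j) K ∧
              (∀ i, i ∉ Idx j → i ∉ K → i ≠ i₀ → x i = u j i)
          · have hcond : ∀ t : Fin (b i₀),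
                (Disjoint (Idx j) K ∧
                  (∀ i, i ∉ Idx j → i ∉ K → Function.update x i₀ t i = u j i)) ↔
                t = u j i₀ := by
              intro t
              constructor
              · rintro ⟨-, h⟩
                have := h i₀ hmem hi₀
                rwa [Function.update_self] at this
              · intro ht
                refine ⟨hDA.1, fun i hi1 hi2 => ?_⟩
                by_cases hne : i = i₀
                · subst hne; rwa [Function.update_self]
                · rw [Function.update_of_ne hne]; exact hDA.2 i hi1 hi2 hne
            have hsum2 : (∑ t : Fin (b i₀),
                (if Disjoint (Idx j) K ∧
                    (∀ i, i ∉ Idx j → i ∉ K → Function.update x i₀ t i = u j i)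
                  then ∏ i ∈ K,
                    ((b i : ℤ) * (if Function.update x i₀ t i = u j i then 1 else 0) - 1)
                  else 0))
                = ∏ i ∈ K, ((b i : ℤ) * (if x i = u j i then 1 else 0) - 1) := by
              have hterm : ∀ t : Fin (b i₀),
                  (if Disjoint (Idx j) K ∧
                      (∀ i, i ∉ Idx j → i ∉ K → Function.update x i₀ t i = u j i)
                    then ∏ i ∈ K,
                      ((b i : ℤ) * (if Function.update x i₀ t i = u j i then 1 else 0) - 1)
                    else 0)
                  = (if t = u j i₀
                      then ∏ i ∈ K, ((b i : ℤ) * (if x i = u j i then 1 else 0) - 1) else 0) := by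
                intro t
                rw [hprodK t]
                by_cases h : t = u j i₀
                · rw [if_pos ((hcond t).2 h), if_pos h]
                · rw [if_neg (fun hc => h ((hcond t).1 hc)), if_neg h]
              rw [Finset.sum_congr rfl (fun t _ => hterm t)]
              simp
            rw [hsum2]
            have hcondx : (Disjoint (Idx j) K ∧ (∀ i, i ∉ Idx j → i ∉ K → x i = u j i)) ↔
                x i₀ = u j i₀ := by
              constructor
              · rintro ⟨-, h⟩; exact h i₀ hmem hi₀
              · intro hx
                refine ⟨hDA.1, fun i hi1 hi2 => ?_⟩
                by_cases hne : i = i₀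
                · subst hne; exact hx
                · exact hDA.2 i hi1 hi2 hne
            have hcondins : (Disjoint (Idx j) (insert i₀ K) ∧
                (∀ i, i ∉ Idx j → i ∉ insert i₀ K → x i = u j i)) := by
              refine ⟨Finset.disjoint_insert_right.2 ⟨hmem, hDA.1⟩, fun i hi1 hi2 => ?_⟩
              have h2 := Finset.mem_insert.not.1 hi2
              push_neg at h2
              exact hDA.2 i hi1 h2.2 h2.1
            rw [if_pos hcondins, Finset.prod_insert hi₀]
            by_cases hx : x i₀ = u j i₀
            · rw [if_pos hx, if_pos (hcondx.2 hx)]; ring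
            · rw [if_neg hx, if_neg (fun hc => hx (hcondx.1 hc))]; ring
          · -- outer condition fails: everything is 0
            have h1 : ¬(Disjoint (Idx j) (insert i₀ K) ∧
                (∀ i, i ∉ Idx j → i ∉ insert i₀ K → x i = u j i)) := by
              rintro ⟨hd, h⟩
              exact hDA ⟨(Finset.disjoint_insert_right.1 hd).2,
                fun i hi1 hi2 hne => h i hi1 (by simp [hne, hi2])⟩
            have h2 : ¬(Disjoint (Idx j) K ∧ (∀ i, i ∉ Idx j → i ∉ K → x i = u j i)) := by
              rintro ⟨hd, h⟩
              exact hDA ⟨hd, fun i hi1 hi2 _ => h i hi1 hi2⟩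
            have h3 : ∀ t : Fin (b i₀), ¬(Disjoint (Idx j) K ∧
                (∀ i, i ∉ Idx j → i ∉ K → Function.update x i₀ t i = u j i)) := by
              rintro t ⟨hd, h⟩
              refine hDA ⟨hd, fun i hi1 hi2 hne => ?_⟩
              have := h i hi1 hi2
              rwa [Function.update_of_ne hne] at this
            rw [if_neg h1, if_neg h2]
            rw [Finset.sum_congr rfl (fun t _ => if_neg (h3 t))]
            simp
      rw [Finset.sum_congr rfl (fun j _ => key j), Finset.sum_sub_distrib,
        ← Finset.mul_sum, IH x, Finset.sum_comm]
      rw [Finset.sum_congr rfl (fun t (_ : t ∈ univ) => IH (Function.update x i₀ t))]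
      simp [mul_comm]



end Aux

/-- Berger–Felzenbaum–Fraenkel lemma: let `τ` (given as an injective family of
cells `C j` with index sets `Idx j` and basepoints `u j`) be a cell partition of
the lattice parallelotope `P(n; b) = Π i, Fin (b i)` (all `b i ≥ 2`) into at
least two cells, and let `E` be subset minimal. Put `m = min { b i : i ∉ Idx E }`.
Then `τ` contains at least `m` cells with index equal to `Idx E`. -/
theorem cell_partition_subset_minimal {n : ℕ} (b : Fin n → ℕ) (hb : ∀ i, 2 ≤ b i)
    {ι : Type*} [Fintype ι] (C : ι → Set (∀ i, Fin (b i)))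
    (Idx : ι → Finset (Fin n)) (u : ι → ∀ i, Fin (b i))
    (hcell : ∀ j, C j = {c | ∀ i ∉ Idx j, c i = u j i})
    (hinj : Function.Injective C)
    (hpart : ∀ x : ∀ i, Fin (b i), ∃! j : ι, x ∈ C j)
    (htwo : 2 ≤ Fintype.card ι)
    (E : ι) (hmin : ∀ j : ι, Idx j ⊆ Idx E → Idx j = Idx E) :
    sInf {m : ℕ | ∃ i : Fin n, i ∉ Idx E ∧ m = b i} ≤
      Nat.card {j : ι // Idx j = Idx E} := by
  classical
  -- `Idx E ≠ univ`
  have hEuniv : Idx E ≠ Finset.univ := by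
    intro hEq
    obtain ⟨j, hj⟩ := Fintype.exists_ne_of_one_lt_card (by omega) E
    have hjj : u j ∈ C j := by rw [hcell]; exact fun i _ => rfl
    have hjE : u j ∈ C E := by
      rw [hcell]; intro i hi
      exact absurd (hEq ▸ Finset.mem_univ i) hi
    obtain ⟨j', _, huni⟩ := hpart (u j)
    exact hj ((huni j hjj).trans (huni E hjE).symm)
  set K₀ : Finset (Fin n) := (Idx E)ᶜ with hK₀def
  have hK₀ne : K₀ ≠ ∅ := by
    intro h
    exact hEuniv (by simpa [hK₀def, Finset.compl_eq_empty_iff] using h)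
  have hdisj_iff : ∀ s : Finset (Fin n), Disjoint s K₀ ↔ s ⊆ Idx E := by
    intro s
    constructor
    · intro hd i hi
      by_contra h
      exact (Finset.disjoint_left.1 hd hi) (Finset.mem_compl.2 h)
    · intro hsub
      rw [Finset.disjoint_left]
      intro i hi hic
      exact (Finset.mem_compl.1 hic) (hsub hi)
  set A : Finset ι := Finset.univ.filter (fun j => Idx j = Idx E) with hAdef
  have hid : ∀ x : ∀ i, Fin (b i),
      ∑ j ∈ A, ∏ i ∈ K₀, ((b i : ℤ) * (if x i = u j i then 1 else 0) - 1) = 0 := by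
    intro x
    have h0 := claimA C Idx u hcell hpart K₀ x
    rw [if_neg hK₀ne] at h0
    rw [hAdef, Finset.sum_filter]
    rw [show (∑ j : ι, if Idx j = Idx E
        then ∏ i ∈ K₀, ((b i : ℤ) * (if x i = u j i then 1 else 0) - 1) else 0)
      = ∑ j : ι, (if Disjoint (Idx j) K₀ ∧ ∀ i, i ∉ Idx j → i ∉ K₀ → x i = u j i
        then ∏ i ∈ K₀, ((b i : ℤ) * (if x i = u j i then 1 else 0) - 1) else 0)
      from Finset.sum_congr rfl fun j _ => ?_]
    · exact h0
    by_cases hj : Idx j = Idx E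
    · have hcpx : Disjoint (Idx j) K₀ ∧ ∀ i, i ∉ Idx j → i ∉ K₀ → x i = u j i := by
        refine ⟨(hdisj_iff _).2 (le_of_eq hj), fun i hi1 hi2 => ?_⟩
        have hiE : i ∈ Idx E := by simpa [hK₀def] using hi2
        exact absurd (by rw [hj]; exact hiE) hi1
      rw [if_pos hj, if_pos hcpx]
    · have hcpx : ¬(Disjoint (Idx j) K₀ ∧ ∀ i, i ∉ Idx j → i ∉ K₀ → x i = u j i) := by
        rintro ⟨hd, -⟩
        exact hj (hmin j ((hdisj_iff _).1 hd))
      rw [if_neg hj, if_neg hcpx]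
  have hinjA : ∀ j ∈ A, ∀ k ∈ A, (∀ i ∈ K₀, u j i = u k i) → j = k := by
    intro j hj k hk h
    have hIj := (Finset.mem_filter.1 hj).2
    have hIk := (Finset.mem_filter.1 hk).2
    apply hinj
    rw [hcell, hcell]
    ext c
    simp only [Set.mem_setOf_eq, hIj, hIk]
    constructor <;> intro hc i hi
    · rw [← h i (Finset.mem_compl.2 hi)]; exact hc i hi
    · rw [h i (Finset.mem_compl.2 hi)]; exact hc i hi
  obtain ⟨i, hiK, hle⟩ := lemB hb u K₀ A
    ⟨E, Finset.mem_filter.2 ⟨Finset.mem_univ E, rfl⟩⟩ hinjA hid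
  have h1 : sInf {m : ℕ | ∃ i : Fin n, i ∉ Idx E ∧ m = b i} ≤ b i :=
    Nat.sInf_le ⟨i, Finset.mem_compl.1 hiK, rfl⟩
  have h2 : Nat.card {j : ι // Idx j = Idx E} = A.card := by
    rw [Nat.card_eq_fintype_card, Fintype.card_subtype]
  omega
end

section
/- Let {α_i mod I_i}_{i=1}^k be an exact covering system of O_K, let I = ∩_i I_i = ∏_j 𝔭_j^{r_j}, fix t_j ∈ 𝔭_j \ 𝔭_j² and complete representatives B_j of O_K/𝔭_j with 0 ∈ B_j, let I' = ∏_j 𝔭_j^{s_j} with 0 ≤ s_j ≤ r_j, and let S_{I'} be the set of elements of the canonical representative set S of O_K/I whose 𝔭_j-adic digits (in base t_j, digits in B_j) vanish in positions ≥ s_j for each j. Then for every i with (α_i + I_i) ∩ S_{I'} ≠ ∅, every element of α_i + I_i can be written as the sum of an element of (α_i + I_i) ∩ S_{I'} and an element of I'. -/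
open NumberField

set_option synthInstance.maxHeartbeats 1000000
set_option linter.unusedSectionVars false

section Aux

variable {R : Type*} [CommRing R] [IsDomain R] [IsDedekindDomain R]

lemma span_sup_sq {P : Ideal R} (hP : P.IsPrime) (hPb : P ≠ ⊥) {t : R}
    (ht : t ∈ P) (ht2 : t ∉ P ^ 2) : Ideal.span {t} ⊔ P ^ 2 = P := by
  have hdvd : Ideal.span {t} ⊔ P ^ 2 ∣ P ^ 2 := Ideal.dvd_iff_le.mpr le_sup_right
  obtain ⟨i, hi, hassoc⟩ := (dvd_prime_pow (Ideal.prime_of_isPrime hPb hP) 2).mp hdvd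
  have hJeq : Ideal.span {t} ⊔ P ^ 2 = P ^ i := associated_iff_eq.mp hassoc
  have hJle : Ideal.span {t} ⊔ P ^ 2 ≤ P := sup_le ((Ideal.span_singleton_le_iff_mem _).mpr ht)
    (le_trans (Ideal.pow_le_pow_right one_le_two) (by simp))
  have htJ : t ∈ Ideal.span {t} ⊔ P ^ 2 :=
    le_sup_left (a := Ideal.span {t}) (Ideal.mem_span_singleton_self t)
  interval_cases i
  · rw [pow_zero, Ideal.one_eq_top] at hJeq
    exact absurd (top_le_iff.mp (hJeq ▸ hJle)) hP.ne_top
  · simpa using hJeq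
  · exact absurd (hJeq ▸ htJ) ht2

lemma pow_eq_span_sup {P : Ideal R} (hP : P.IsPrime) (hPb : P ≠ ⊥) {t : R}
    (ht : t ∈ P) (ht2 : t ∉ P ^ 2) : ∀ n : ℕ, P ^ n = Ideal.span {t ^ n} ⊔ P ^ (n + 1) := by
  intro n
  induction n with
  | zero => simp
  | succ n ih =>
    apply le_antisymm
    · calc P ^ (n+1) = P ^ n * P := pow_succ P n
        _ ≤ (Ideal.span {t ^ n} ⊔ P ^ (n+1)) * (Ideal.span {t} ⊔ P ^ 2) :=
            Ideal.mul_mono ih.le (span_sup_sq hP hPb ht ht2).ge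
        _ ≤ Ideal.span {t ^ (n+1)} ⊔ P ^ (n + 2) := by
            rw [Ideal.sup_mul, Ideal.mul_sup, Ideal.mul_sup]
            refine sup_le (sup_le ?_ ?_) (sup_le ?_ ?_)
            · rw [Ideal.span_singleton_mul_span_singleton, ← pow_succ]
              exact le_sup_left
            · refine le_trans ?_ (le_sup_right)
              calc Ideal.span {t ^ n} * P ^ 2 ≤ P ^ n * P ^ 2 :=
                    Ideal.mul_mono_left ((Ideal.span_singleton_le_iff_mem _).mpr (Ideal.pow_mem_pow ht n))
                _ = P ^ (n + 2) := by ring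
            · refine le_trans ?_ (le_sup_right)
              calc P ^ (n+1) * Ideal.span {t} ≤ P ^ (n+1) * P :=
                    Ideal.mul_mono_right ((Ideal.span_singleton_le_iff_mem _).mpr ht)
                _ = P ^ (n + 2) := by ring
            · refine le_trans ?_ (le_sup_right)
              calc P ^ (n+1) * P ^ 2 ≤ P ^ (n+1) * P ^ 1 :=
                    Ideal.mul_mono_right (Ideal.pow_le_pow_right (by omega))
                _ = P ^ (n + 2) := by ring
    · exact sup_le ((Ideal.span_singleton_le_iff_mem _).mpr (Ideal.pow_mem_pow ht (n+1)))
        (Ideal.pow_le_pow_right (by omega))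

lemma digit_exists {P : Ideal R} (hP : P.IsPrime) (hPb : P ≠ ⊥) {t : R}
    (ht : t ∈ P) (ht2 : t ∉ P ^ 2) {B : Set R}
    (hB : ∀ x : R, ∃! β : R, β ∈ B ∧ x - β ∈ P) (h0B : (0 : R) ∈ B) (n : ℕ) (x : R) :
    ∃ c : ℕ → R, (∀ m, c m ∈ B) ∧ x - ∑ m ∈ Finset.range n, c m * t ^ m ∈ P ^ n := by
  induction n with
  | zero => exact ⟨fun _ => 0, fun _ => h0B, by simp⟩
  | succ n ih =>
    obtain ⟨c, hcB, hc⟩ := ih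
    rw [pow_eq_span_sup hP hPb ht ht2 n] at hc
    obtain ⟨u, hu, w, hw, huw⟩ := Submodule.mem_sup.mp hc
    obtain ⟨a, rfl⟩ := Ideal.mem_span_singleton.mp hu
    obtain ⟨β, ⟨hβB, hβ⟩, -⟩ := hB a
    refine ⟨fun m => if m = n then β else c m, fun m => by dsimp; split <;> [exact hβB; exact hcB m], ?_⟩
    rw [Finset.sum_range_succ]
    have hsum : ∑ m ∈ Finset.range n, (if m = n then β else c m) * t ^ m
        = ∑ m ∈ Finset.range n, c m * t ^ m :=
      Finset.sum_congr rfl fun m hm => by rw [if_neg (Finset.mem_range.mp hm).ne]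
    have hbeta : (fun m => if m = n then β else c m) n = β := if_pos rfl
    rw [hsum, hbeta]
    have heq : x - (∑ m ∈ Finset.range n, c m * t ^ m + β * t ^ n) = (a - β) * t ^ n + w := by
      linear_combination -huw
    rw [heq]
    exact Ideal.add_mem _ (by rw [pow_succ, mul_comm (P ^ n) P]; exact Ideal.mul_mem_mul hβ (Ideal.pow_mem_pow ht n)) hw

lemma cancel_t {P : Ideal R} (hP : P.IsPrime) (hPb : P ≠ ⊥) {t : R}
    (ht : t ∈ P) (ht2 : t ∉ P ^ 2) {u : R} {n : ℕ} (h : t * u ∈ P ^ (n + 1)) : u ∈ P ^ n := by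
  have hprime := Ideal.prime_of_isPrime hPb hP
  have hdvd : P ^ (n+1) ∣ Ideal.span {t} * Ideal.span {u} := by
    rw [Ideal.span_singleton_mul_span_singleton, Ideal.dvd_span_singleton]
    exact h
  obtain ⟨J, hJ⟩ : P ∣ Ideal.span {t} := Ideal.dvd_span_singleton.mpr ht
  have hPJ : ¬ P ∣ J := by
    intro ⟨J', hJ'⟩
    exact ht2 (Ideal.dvd_span_singleton.mp ⟨J', by rw [hJ, hJ', sq]; ring⟩)
  rw [hJ, pow_succ, mul_comm (P ^ n) P, mul_assoc] at hdvd
  have hPne : P ≠ (0 : Ideal R) := by simpa using hPb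
  have h2 : P ^ n ∣ J * Ideal.span {u} := (mul_dvd_mul_iff_left hPne).mp hdvd
  exact Ideal.dvd_span_singleton.mp (Prime.pow_dvd_of_dvd_mul_left hprime n hPJ h2)

lemma digit_unique {P : Ideal R} (hP : P.IsPrime) (hPb : P ≠ ⊥) {t : R}
    (ht : t ∈ P) (ht2 : t ∉ P ^ 2) {B : Set R}
    (hB : ∀ x : R, ∃! β : R, β ∈ B ∧ x - β ∈ P) (n : ℕ) :
    ∀ c d : ℕ → R, (∀ m, c m ∈ B) → (∀ m, d m ∈ B) →
    (∑ m ∈ Finset.range n, c m * t ^ m) - (∑ m ∈ Finset.range n, d m * t ^ m) ∈ P ^ n →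
    ∀ m < n, c m = d m := by
  induction n with
  | zero => exact fun _ _ _ _ _ m hm => absurd hm (by omega)
  | succ n ih =>
    intro c d hcB hdB hmem m hm
    have key : (∑ m ∈ Finset.range (n+1), c m * t ^ m) - (∑ m ∈ Finset.range (n+1), d m * t ^ m)
        = (c 0 - d 0) + t * ((∑ m ∈ Finset.range n, c (m+1) * t ^ m) - (∑ m ∈ Finset.range n, d (m+1) * t ^ m)) := by
      have hshift : ∀ g : ℕ → R, ∑ k ∈ Finset.range n, g (k+1) * t ^ (k+1)
          = t * ∑ k ∈ Finset.range n, g (k+1) * t ^ k := by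
        intro g
        rw [Finset.mul_sum]
        exact Finset.sum_congr rfl fun k _ => by ring
      rw [Finset.sum_range_succ' (fun m => c m * t ^ m) n,
        Finset.sum_range_succ' (fun m => d m * t ^ m) n, hshift c, hshift d]
      ring
    have h0 : c 0 = d 0 := by
      have hmem1 : (c 0 - d 0) + t * ((∑ m ∈ Finset.range n, c (m+1) * t ^ m) - (∑ m ∈ Finset.range n, d (m+1) * t ^ m)) ∈ P := by
        rw [← key]
        have hle : P ^ (n+1) ≤ P := by
          calc P ^ (n+1) ≤ P ^ 1 := Ideal.pow_le_pow_right (by omega)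
            _ = P := pow_one P
        exact hle hmem
      have hc0d0 : c 0 - d 0 ∈ P := by
        have ht' : t * ((∑ m ∈ Finset.range n, c (m+1) * t ^ m) - (∑ m ∈ Finset.range n, d (m+1) * t ^ m)) ∈ P :=
          Ideal.mul_mem_right _ _ ht
        simpa using Ideal.sub_mem _ hmem1 ht'
      obtain ⟨β, -, huniq⟩ := hB (c 0)
      have e1 : c 0 = β := huniq _ ⟨hcB 0, by simp⟩
      have e2 : d 0 = β := huniq _ ⟨hdB 0, hc0d0⟩
      rw [e1, e2]
    match m, hm with
    | 0, _ => exact h0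
    | (m+1), hm =>
      have hmem2 : t * ((∑ m ∈ Finset.range n, c (m+1) * t ^ m) - (∑ m ∈ Finset.range n, d (m+1) * t ^ m)) ∈ P ^ (n+1) := by
        have : (c 0 - d 0) = 0 := by rw [h0]; ring
        rw [key, this, zero_add] at hmem
        exact hmem
      exact ih (fun m => c (m+1)) (fun m => d (m+1)) (fun m => hcB _) (fun m => hdB _)
        (cancel_t hP hPb ht ht2 hmem2) m (by omega)

lemma dvd_prod_pow_struct {ι : Type*} [DecidableEq ι] (p : ι → Ideal R) (r : ι → ℕ)
    (s : Finset ι) (hp : ∀ j ∈ s, Prime (p j)) (a : Ideal R)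
    (ha : a ∣ ∏ j ∈ s, p j ^ r j) :
    ∃ e : ι → ℕ, (∀ j ∈ s, e j ≤ r j) ∧ a = ∏ j ∈ s, p j ^ e j := by
  induction s using Finset.induction_on generalizing a with
  | empty =>
    rw [Finset.prod_empty] at ha
    refine ⟨fun _ => 0, by simp, ?_⟩
    rw [Finset.prod_empty]
    exact Ideal.isUnit_iff.mp (isUnit_of_dvd_one ha) |>.trans Ideal.one_eq_top.symm
  | @insert j s' hj ih =>
    rw [Finset.prod_insert hj] at ha
    obtain ⟨b, c, hb, hc, rfl⟩ := exists_dvd_and_dvd_of_dvd_mul ha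
    obtain ⟨i, hi, hbi⟩ := (dvd_prime_pow (hp j (Finset.mem_insert_self j s')) (r j)).mp hb
    have hbeq : b = p j ^ i := associated_iff_eq.mp hbi
    obtain ⟨e', he', hc'⟩ := ih (fun j hj => hp j (Finset.mem_insert_of_mem hj)) c hc
    refine ⟨Function.update e' j i, ?_, ?_⟩
    · intro j' hj'
      rcases Finset.mem_insert.mp hj' with rfl | hj'
      · simpa using hi
      · rw [Function.update_apply, if_neg (fun (h : j' = j) => hj (h ▸ hj'))]
        exact he' j' hj'
    · rw [Finset.prod_insert hj, Function.update_self, ← hbeq, hc']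
      congr 1
      exact Finset.prod_congr rfl fun j' hj' => by
        rw [Function.update_apply, if_neg (fun (h : j' = j) => hj (h ▸ hj'))]

lemma mem_prod_pow_of_forall {ι : Type*} (p : ι → Ideal R) (e : ι → ℕ) (s : Finset ι)
    (hp : ∀ j ∈ s, (p j).IsPrime) (hpb : ∀ j ∈ s, p j ≠ ⊥)
    (hinj : ∀ j ∈ s, ∀ j' ∈ s, p j = p j' → j = j') (x : R)
    (hx : ∀ j ∈ s, x ∈ p j ^ e j) : x ∈ ∏ j ∈ s, p j ^ e j := by
  rw [← Ideal.dvd_span_singleton]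
  refine Finset.prod_dvd_of_coprime ?_ fun j hj => Ideal.dvd_span_singleton.mpr (hx j hj)
  intro j hj j' hj' hne
  have hmax : ∀ i ∈ s, (p i).IsMaximal := fun i hi => (hp i hi).isMaximal (hpb i hi)
  have : p j ⊔ p j' = ⊤ :=
    (hmax j hj).coprime_of_ne (hmax j' hj') (fun h => hne (hinj j hj j' hj' h))
  exact IsCoprime.pow (Ideal.isCoprime_iff_sup_eq.mpr this)

lemma sum_Ico_mem_pow {P : Ideal R} {t : R} (ht : t ∈ P) (g : ℕ → R) (a b n : ℕ) (h : n ≤ a) :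
    ∑ m ∈ Finset.Ico a b, g m * t ^ m ∈ P ^ n :=
  Ideal.sum_mem _ fun m hm => Ideal.mul_mem_left _ _
    (Ideal.pow_le_pow_right (le_trans h (Finset.mem_Ico.mp hm).1) (Ideal.pow_mem_pow ht m))

end Aux

/-- Let `{α_i mod I_i}` be an exact covering system of `𝓞 K`, with
`I = ⨅ I_i = ∏ 𝔭_j ^ r_j`, `t_j ∈ 𝔭_j \ 𝔭_j²`, `B_j` complete representatives
of `𝓞 K / 𝔭_j` with `0 ∈ B_j`, `I' = ∏ 𝔭_j ^ s_j` with `s_j ≤ r_j`, `S` a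
complete representative set of `𝓞 K / I`, and `S_{I'}` the set of elements of
`S` whose `𝔭_j`-adic digits vanish in positions `≥ s_j` for each `j`. Then for
every `i` with `(α_i + I_i) ∩ S_{I'} ≠ ∅`, every element of `α_i + I_i` is the
sum of an element of `(α_i + I_i) ∩ S_{I'}` and an element of `I'`. -/
theorem coset_digit_representatives {K : Type*} [Field K] [NumberField K]
    {k l : ℕ} (α : Fin k → 𝓞 K) (I : Fin k → Ideal (𝓞 K))
    (hbot : ∀ i, I i ≠ ⊥) (htop : ∀ i, I i ≠ ⊤)
    (hcover : ∀ x : 𝓞 K, ∃! i : Fin k, x - α i ∈ I i)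
    (𝔭 : Fin l → Ideal (𝓞 K)) (hprime : ∀ j, (𝔭 j).IsPrime)
    (hpbot : ∀ j, 𝔭 j ≠ ⊥) (hpinj : Function.Injective 𝔭)
    (r : Fin l → ℕ) (hr : ∀ j, 0 < r j)
    (hI : (⨅ i, I i) = ∏ j, 𝔭 j ^ r j)
    (t : Fin l → 𝓞 K) (ht : ∀ j, t j ∈ 𝔭 j) (ht2 : ∀ j, t j ∉ 𝔭 j ^ 2)
    (B : Fin l → Set (𝓞 K))
    (hB : ∀ j, ∀ x : 𝓞 K, ∃! β : 𝓞 K, β ∈ B j ∧ x - β ∈ 𝔭 j)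
    (h0B : ∀ j, (0 : 𝓞 K) ∈ B j)
    (s : Fin l → ℕ) (hs : ∀ j, s j ≤ r j)
    (S : Set (𝓞 K))
    (hS : ∀ x : 𝓞 K, ∃! y : 𝓞 K, y ∈ S ∧ x - y ∈ (∏ j, 𝔭 j ^ r j : Ideal (𝓞 K))) :
    ∀ i : Fin k,
      (∃ y : 𝓞 K, (y - α i ∈ I i) ∧ y ∈ S ∧
          (∀ j, ∃ c : ℕ → 𝓞 K, (∀ m, c m ∈ B j) ∧
            y - ∑ m ∈ Finset.range (s j), c m * t j ^ m ∈ 𝔭 j ^ r j)) →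
      ∀ x : 𝓞 K, x - α i ∈ I i →
        ∃ y : 𝓞 K, (y - α i ∈ I i) ∧ y ∈ S ∧
          (∀ j, ∃ c : ℕ → 𝓞 K, (∀ m, c m ∈ B j) ∧
            y - ∑ m ∈ Finset.range (s j), c m * t j ^ m ∈ 𝔭 j ^ r j) ∧
          ∃ z ∈ (∏ j, 𝔭 j ^ s j : Ideal (𝓞 K)), x = y + z := by
  rintro i ⟨y₀, hy₀I, hy₀S, hy₀dig⟩ x hx
  have hprime' : ∀ j, Prime (𝔭 j) := fun j => Ideal.prime_of_isPrime (hpbot j) (hprime j)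
  -- digits of x at each prime
  choose c hcB hc using fun j =>
    digit_exists (hprime j) (hpbot j) (ht j) (ht2 j) (hB j) (h0B j) (r j) x
  -- CRT element w congruent to the truncation at each prime
  obtain ⟨w, hw⟩ := IsDedekindDomain.exists_forall_sub_mem_ideal (s := Finset.univ) 𝔭 r
    (fun j _ => hprime' j) (fun j _ j' _ hne h => hne (hpinj h))
    (fun j => ∑ m ∈ Finset.range (s j.1), c j.1 m * t j.1 ^ m)
  -- representative of w in S
  obtain ⟨y, ⟨hyS, hwy⟩, -⟩ := hS w
  have hprodle : ∀ j : Fin l, (∏ j', 𝔭 j' ^ r j') ≤ 𝔭 j ^ r j := fun j =>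
    Ideal.le_of_dvd (Finset.dvd_prod_of_mem _ (Finset.mem_univ j))
  have hwyj : ∀ j, w - y ∈ 𝔭 j ^ r j := fun j => hprodle j hwy
  have hwj : ∀ j, w - ∑ m ∈ Finset.range (s j), c j m * t j ^ m ∈ 𝔭 j ^ r j :=
    fun j => hw j (Finset.mem_univ j)
  -- the digits of y below s j are the digits of x
  have hyj : ∀ j, y - ∑ m ∈ Finset.range (s j), c j m * t j ^ m ∈ 𝔭 j ^ r j := by
    intro j
    have heq : y - ∑ m ∈ Finset.range (s j), c j m * t j ^ m
        = (w - ∑ m ∈ Finset.range (s j), c j m * t j ^ m) - (w - y) := by ring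
    rw [heq]
    exact Ideal.sub_mem _ (hwj j) (hwyj j)
  have hydig : ∀ j, ∃ cc : ℕ → 𝓞 K, (∀ m, cc m ∈ B j) ∧
      y - ∑ m ∈ Finset.range (s j), cc m * t j ^ m ∈ 𝔭 j ^ r j :=
    fun j => ⟨c j, hcB j, hyj j⟩
  -- x minus its truncation lies in 𝔭 j ^ s j
  have hxs : ∀ j, x - ∑ m ∈ Finset.range (s j), c j m * t j ^ m ∈ 𝔭 j ^ s j := by
    intro j
    have hsplit : x - ∑ m ∈ Finset.range (s j), c j m * t j ^ m
        = (x - ∑ m ∈ Finset.range (r j), c j m * t j ^ m)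
          + ∑ m ∈ Finset.Ico (s j) (r j), c j m * t j ^ m := by
      rw [← Finset.sum_range_add_sum_Ico _ (hs j)]; ring
    rw [hsplit]
    exact Ideal.add_mem _ (Ideal.pow_le_pow_right (hs j) (hc j))
      (sum_Ico_mem_pow (ht j) (c j) _ _ _ le_rfl)
  -- x - y lies in 𝔭 j ^ s j for every j
  have hxysj : ∀ j, x - y ∈ 𝔭 j ^ s j := by
    intro j
    have heq : x - y = (x - ∑ m ∈ Finset.range (s j), c j m * t j ^ m)
        - (w - ∑ m ∈ Finset.range (s j), c j m * t j ^ m) + (w - y) := by ring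
    rw [heq]
    exact Ideal.add_mem _ (Ideal.sub_mem _ (hxs j) (Ideal.pow_le_pow_right (hs j) (hwj j)))
      (Ideal.pow_le_pow_right (hs j) (hwyj j))
  -- factor I i as a product of prime powers
  obtain ⟨e, he, hIe⟩ := dvd_prod_pow_struct 𝔭 r Finset.univ (fun j _ => hprime' j) (I i)
    (Ideal.dvd_iff_le.mpr (hI ▸ iInf_le I i))
  have hIle : ∀ j, I i ≤ 𝔭 j ^ e j := fun j => hIe ▸
    Ideal.le_of_dvd (Finset.dvd_prod_of_mem _ (Finset.mem_univ j))
  -- key: x - y ∈ 𝔭 j ^ e j for every j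
  have hkey : ∀ j, x - y ∈ 𝔭 j ^ e j := by
    intro j
    by_cases hcase : e j ≤ s j
    · exact Ideal.pow_le_pow_right hcase (hxysj j)
    · push_neg at hcase
      have hesr : e j ≤ r j := he j (Finset.mem_univ j)
      obtain ⟨c', hc'B, hc'⟩ := hy₀dig j
      have h1 : x - y₀ ∈ 𝔭 j ^ e j := hIle j (by
        have : x - y₀ = (x - α i) - (y₀ - α i) := by ring
        rw [this]; exact Ideal.sub_mem _ hx hy₀I)
      have h3 : x - ∑ m ∈ Finset.range (s j), c' m * t j ^ m ∈ 𝔭 j ^ e j := by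
        have heq : x - ∑ m ∈ Finset.range (s j), c' m * t j ^ m
            = (x - y₀) + (y₀ - ∑ m ∈ Finset.range (s j), c' m * t j ^ m) := by ring
        rw [heq]
        exact Ideal.add_mem _ h1 (Ideal.pow_le_pow_right hesr hc')
      have h4 : x - ∑ m ∈ Finset.range (e j), c j m * t j ^ m ∈ 𝔭 j ^ e j := by
        have hsplit : x - ∑ m ∈ Finset.range (e j), c j m * t j ^ m
            = (x - ∑ m ∈ Finset.range (r j), c j m * t j ^ m)
              + ∑ m ∈ Finset.Ico (e j) (r j), c j m * t j ^ m := by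
          rw [← Finset.sum_range_add_sum_Ico _ hesr]; ring
        rw [hsplit]
        exact Ideal.add_mem _ (Ideal.pow_le_pow_right hesr (hc j))
          (sum_Ico_mem_pow (ht j) (c j) _ _ _ le_rfl)
      set d : ℕ → 𝓞 K := fun m => if m < s j then c' m else 0 with hd
      have hdB : ∀ m, d m ∈ B j := fun m => by
        rw [hd]; dsimp; split <;> [exact hc'B m; exact h0B j]
      have hsum_d : ∑ m ∈ Finset.range (e j), d m * t j ^ m
          = ∑ m ∈ Finset.range (s j), c' m * t j ^ m := by
        rw [← Finset.sum_range_add_sum_Ico _ hcase.le]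
        have hzero : ∑ m ∈ Finset.Ico (s j) (e j), d m * t j ^ m = 0 :=
          Finset.sum_eq_zero fun m hm => by
            have hm' := (Finset.mem_Ico.mp hm).1
            rw [hd]; dsimp
            rw [if_neg (by omega), zero_mul]
        have hfst : ∑ m ∈ Finset.range (s j), d m * t j ^ m
            = ∑ m ∈ Finset.range (s j), c' m * t j ^ m :=
          Finset.sum_congr rfl fun m hm => by
            rw [hd]; dsimp; rw [if_pos (Finset.mem_range.mp hm)]
        rw [hzero, hfst, add_zero]
      have h5 : (∑ m ∈ Finset.range (e j), c j m * t j ^ m)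
          - (∑ m ∈ Finset.range (e j), d m * t j ^ m) ∈ 𝔭 j ^ e j := by
        rw [hsum_d]
        have heq : (∑ m ∈ Finset.range (e j), c j m * t j ^ m)
            - ∑ m ∈ Finset.range (s j), c' m * t j ^ m
            = (x - ∑ m ∈ Finset.range (s j), c' m * t j ^ m)
              - (x - ∑ m ∈ Finset.range (e j), c j m * t j ^ m) := by ring
        rw [heq]
        exact Ideal.sub_mem _ h3 h4
      have h6 : ∀ m < e j, c j m = d m :=
        digit_unique (hprime j) (hpbot j) (ht j) (ht2 j) (hB j) (e j) (c j) d (hcB j) hdB h5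
      have h7 : ∑ m ∈ Finset.range (e j), c j m * t j ^ m
          = ∑ m ∈ Finset.range (s j), c j m * t j ^ m := by
        rw [← Finset.sum_range_add_sum_Ico _ hcase.le]
        have hzero : ∑ m ∈ Finset.Ico (s j) (e j), c j m * t j ^ m = 0 :=
          Finset.sum_eq_zero fun m hm => by
            have hm' := Finset.mem_Ico.mp hm
            have hcd : c j m = d m := h6 m hm'.2
            have hm1 := hm'.1
            rw [hcd, hd]; dsimp; rw [if_neg (by omega), zero_mul]
        rw [hzero, add_zero]
      have h8 : x - ∑ m ∈ Finset.range (s j), c j m * t j ^ m ∈ 𝔭 j ^ e j := by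
        rw [← h7]; exact h4
      have heq : x - y = (x - ∑ m ∈ Finset.range (s j), c j m * t j ^ m)
          - (w - ∑ m ∈ Finset.range (s j), c j m * t j ^ m) + (w - y) := by ring
      rw [heq]
      exact Ideal.add_mem _ (Ideal.sub_mem _ h8 (Ideal.pow_le_pow_right hesr (hwj j)))
        (Ideal.pow_le_pow_right hesr (hwyj j))
  have hinj' : ∀ j ∈ Finset.univ, ∀ j' ∈ (Finset.univ : Finset (Fin l)), 𝔭 j = 𝔭 j' → j = j' :=
    fun j _ j' _ h => hpinj h
  have hxyI : x - y ∈ I i := by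
    rw [hIe]
    exact mem_prod_pow_of_forall 𝔭 e Finset.univ (fun j _ => hprime j) (fun j _ => hpbot j)
      hinj' _ (fun j _ => hkey j)
  have hyI : y - α i ∈ I i := by
    have : y - α i = (x - α i) - (x - y) := by ring
    rw [this]; exact Ideal.sub_mem _ hx hxyI
  refine ⟨y, hyI, hyS, hydig, x - y, ?_, by ring⟩
  exact mem_prod_pow_of_forall 𝔭 s Finset.univ (fun j _ => hprime j) (fun j _ => hpbot j)
    hinj' _ (fun j _ => hxysj j)
end

section
/- Let {α_i mod I_i}_{i=1}^k be an exact covering system of O_K, let I_j be a division maximal modulus, and with S_{I_j} as above set J = { i : (α_i + I_i) ∩ S_{I_j} ≠ ∅ }. Then {α_i mod (I_i + I_j) : i ∈ J} is again an exact covering system of O_K. -/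
/-!
Put `P = ∏ 𝔭 j ^ r j = ⨅ i, I i`; since `P ≤ I j₀ = ∏ 𝔭 j ^ s j`, we have `s ≤ r`.

Existence: take the `t j`-adic digits of `x` below position `s j`, glue the truncated expansions
by the Chinese remainder theorem and reduce the result into `S`. This gives `y ∈ S_{I j₀}` with
`x ≡ y (mod I j₀)`, and the unique `i` with `y ∈ α i + I i` works.

Uniqueness: two elements `y, y'` of `S_{I j₀}` congruent modulo `I i + I j₀` are congruent
modulo `I i`. It suffices to check this modulo `I i + 𝔭 j ^ r j` for each `j`, and that ideal is a
power `𝔭 j ^ e`. If `e ≤ s j` it contains `I j₀`. Otherwise `y ≡ y' (mod 𝔭 j ^ s j)`, so the two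
truncated expansions coincide (digits are unique) and `y ≡ y' (mod 𝔭 j ^ r j)`.
-/

open Function Finset

def digitSum {R : Type*} [CommRing R] (t : R) (c : ℕ → R) (n : ℕ) : R :=
  ∑ m ∈ range n, c m * t ^ m

theorem digitSum_succ {R : Type*} [CommRing R] (t : R) (c : ℕ → R) (n : ℕ) :
    digitSum t c (n + 1) = c 0 + t * digitSum t (fun m => c (m + 1)) n := by
  simp only [digitSum, sum_range_succ', mul_sum, pow_succ, pow_zero, mul_one]
  rw [add_comm]
  congr 1
  exact sum_congr rfl fun m _ => by ring

namespace Ideal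

section CommRing

variable {R : Type*} [CommRing R]

theorem mem_sup_prod_of_forall_mem_sup {ι : Type*} {s : Finset ι} {Q : ι → Ideal R}
    (hQ : (s : Set ι).Pairwise (IsCoprime on Q)) (I : Ideal R) {z : R}
    (hz : ∀ j ∈ s, z ∈ I ⊔ Q j) : z ∈ I ⊔ ∏ j ∈ s, Q j := by
  have hmap : ∀ J : Ideal R, z ∈ I ⊔ J ↔ Quotient.mk I z ∈ J.map (Quotient.mk I) := fun J => by
    rw [mem_quotient_iff_mem_sup, sup_comm]
  have hQ' : (s : Set ι).Pairwise (IsCoprime on fun j => (Q j).map (Quotient.mk I)) :=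
    fun i hi j hj hij => isCoprime_iff_sup_eq.mpr <| by
      rw [← map_sup, isCoprime_iff_sup_eq.mp (hQ hi hj hij), map_top]
  rw [hmap, ← mapHom_apply, map_prod]
  simp only [mapHom_apply, prod_eq_iInf_of_pairwise_isCoprime hQ', Submodule.mem_iInf]
  exact fun j hj => (hmap _).mp (hz j hj)

end CommRing

section Uniformizer

variable {R : Type*} [CommRing R] [IsDedekindDomain R] {𝔭 : Ideal R} {t : R}

theorem exists_span_singleton_eq_mul_isCoprime (hp : Prime 𝔭) (ht : t ∈ 𝔭) (ht2 : t ∉ 𝔭 ^ 2) :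
    ∃ J : Ideal R, span {t} = 𝔭 * J ∧ IsCoprime 𝔭 J := by
  obtain ⟨J, hJ⟩ := dvd_iff_le.mpr ((span_singleton_le_iff_mem _).mpr ht)
  refine ⟨J, hJ, isCoprime_iff_sup_eq.mpr ?_⟩
  by_contra hne
  have hJ𝔭 : J ≤ 𝔭 :=
    (((isPrime_of_prime hp).isMaximal hp.ne_zero).eq_of_le hne le_sup_left).symm ▸ le_sup_right
  apply ht2
  rw [pow_two, ← span_singleton_le_iff_mem, hJ]
  exact mul_mono_right hJ𝔭

theorem span_singleton_sup_pow_succ_eq (hp : Prime 𝔭) (ht : t ∈ 𝔭) (ht2 : t ∉ 𝔭 ^ 2) (n : ℕ) :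
    span {t} ⊔ 𝔭 ^ (n + 1) = 𝔭 := by
  obtain ⟨J, hJ, hJ𝔭⟩ := exists_span_singleton_eq_mul_isCoprime hp ht ht2
  rw [hJ, pow_succ', ← mul_sup, isCoprime_iff_sup_eq.mp hJ𝔭.symm.pow_right, mul_top]

theorem mem_pow_of_mul_mem_pow_succ (hp : Prime 𝔭) (ht : t ∈ 𝔭) (ht2 : t ∉ 𝔭 ^ 2) {z : R}
    {n : ℕ} (hz : t * z ∈ 𝔭 ^ (n + 1)) : z ∈ 𝔭 ^ n := by
  obtain ⟨J, hJ, hJ𝔭⟩ := exists_span_singleton_eq_mul_isCoprime hp ht ht2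
  have h : 𝔭 * 𝔭 ^ n ∣ 𝔭 * (J * span {z}) := by
    rw [← pow_succ', ← mul_assoc, ← hJ, span_singleton_mul_span_singleton]
    exact dvd_iff_le.mpr ((span_singleton_le_iff_mem _).mpr hz)
  rw [← span_singleton_le_iff_mem, ← dvd_iff_le]
  exact hJ𝔭.pow_left.dvd_of_dvd_mul_left ((mul_dvd_mul_iff_left hp.ne_zero).mp h)

variable {B : Set R}

theorem exists_digits_sub_mem_pow (hp : Prime 𝔭) (ht : t ∈ 𝔭) (ht2 : t ∉ 𝔭 ^ 2)
    (hB : ∀ x, ∃ β ∈ B, x - β ∈ 𝔭) (h0B : 0 ∈ B) (x : R) (n : ℕ) :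
    ∃ c : ℕ → R, (∀ m, c m ∈ B) ∧ x - digitSum t c n ∈ 𝔭 ^ n := by
  induction n generalizing x with
  | zero => exact ⟨fun _ => 0, fun _ => h0B, by simp [digitSum]⟩
  | succ n ih =>
    obtain ⟨β, hβB, hβ⟩ := hB x
    rw [← span_singleton_sup_pow_succ_eq hp ht ht2 n] at hβ
    obtain ⟨a, ha, b, hb, hab⟩ := Submodule.mem_sup.mp hβ
    obtain ⟨x', rfl⟩ := mem_span_singleton'.mp ha
    obtain ⟨c, hcB, hc⟩ := ih x'
    refine ⟨fun m => if m = 0 then β else c (m - 1), fun m => ?_, ?_⟩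
    · dsimp only
      split_ifs
      exacts [hβB, hcB _]
    · have hx : x - digitSum t (fun m => if m = 0 then β else c (m - 1)) (n + 1)
          = t * (x' - digitSum t c n) + b := by
        simp only [digitSum_succ, ↓reduceIte, Nat.add_one_ne_zero, add_tsub_cancel_right]
        linear_combination -hab
      rw [hx, pow_succ']
      exact add_mem (mul_mem_mul ht hc) (pow_succ' 𝔭 n ▸ hb)

theorem digitSum_eq_of_sub_mem_pow (hp : Prime 𝔭) (ht : t ∈ 𝔭) (ht2 : t ∉ 𝔭 ^ 2)
    (hB : ∀ β ∈ B, ∀ β' ∈ B, β - β' ∈ 𝔭 → β = β') {n : ℕ} {c d : ℕ → R}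
    (hc : ∀ m, c m ∈ B) (hd : ∀ m, d m ∈ B) (h : digitSum t c n - digitSum t d n ∈ 𝔭 ^ n) :
    digitSum t c n = digitSum t d n := by
  induction n generalizing c d with
  | zero => rfl
  | succ n ih =>
    rw [digitSum_succ, digitSum_succ] at h ⊢
    set Dc := digitSum t (fun m => c (m + 1)) n
    set Dd := digitSum t (fun m => d (m + 1)) n
    have h𝔭 : c 0 + t * Dc - (d 0 + t * Dd) ∈ 𝔭 := pow_le_self n.succ_ne_zero h
    have h0 : c 0 = d 0 := hB _ (hc 0) _ (hd 0) <| by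
      have : c 0 - d 0 = c 0 + t * Dc - (d 0 + t * Dd) - t * (Dc - Dd) := by ring
      rw [this]
      exact sub_mem h𝔭 (mul_mem_right _ _ ht)
    have hD : Dc - Dd ∈ 𝔭 ^ n := mem_pow_of_mul_mem_pow_succ hp ht ht2 <| by
      rwa [h0, add_sub_add_left_eq_sub, ← mul_sub] at h
    rw [h0, show Dc = Dd from ih (fun m => hc (m + 1)) (fun m => hd (m + 1)) hD]

theorem sub_mem_pow_of_sub_digitSum_mem (hp : Prime 𝔭) (ht : t ∈ 𝔭) (ht2 : t ∉ 𝔭 ^ 2)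
    (hB : ∀ β ∈ B, ∀ β' ∈ B, β - β' ∈ 𝔭 → β = β') {r s : ℕ} (hsr : s ≤ r) {c d : ℕ → R}
    (hc : ∀ m, c m ∈ B) (hd : ∀ m, d m ∈ B) {y y' : R} (hy : y - digitSum t c s ∈ 𝔭 ^ r)
    (hy' : y' - digitSum t d s ∈ 𝔭 ^ r) (h : y - y' ∈ 𝔭 ^ s) : y - y' ∈ 𝔭 ^ r := by
  have hcd : digitSum t c s = digitSum t d s := by
    refine digitSum_eq_of_sub_mem_pow hp ht ht2 hB hc hd ?_
    rw [show digitSum t c s - digitSum t d s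
        = y - y' - (y - digitSum t c s) + (y' - digitSum t d s) by ring]
    exact add_mem (sub_mem h (pow_le_pow_right hsr hy)) (pow_le_pow_right hsr hy')
  rw [← sub_sub_sub_cancel_right y y' (digitSum t d s)]
  exact sub_mem (hcd ▸ hy) hy'

end Uniformizer

section Primes

variable {R : Type*} [CommRing R] [IsDedekindDomain R]

theorem exists_sup_pow_eq_pow {𝔭 : Ideal R} (hp : Prime 𝔭) (I : Ideal R) (n : ℕ) :
    ∃ e, I ⊔ 𝔭 ^ n = 𝔭 ^ e := by
  obtain ⟨e, -, he⟩ := (dvd_prime_pow hp n).mp (dvd_iff_le.mpr (le_sup_right : 𝔭 ^ n ≤ I ⊔ 𝔭 ^ n))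
  exact ⟨e, associated_iff_eq.mp he⟩

theorem mem_sup_pow_of_mem_sup {𝔭 : Ideal R} (hp : Prime 𝔭) {I I₀ : Ideal R} {r s : ℕ}
    (hI₀ : I₀ ≤ 𝔭 ^ s) {z : R} (hz : z ∈ I ⊔ I₀) (hzs : z ∈ 𝔭 ^ s → z ∈ 𝔭 ^ r) :
    z ∈ I ⊔ 𝔭 ^ r := by
  obtain ⟨e, he⟩ := exists_sup_pow_eq_pow hp I r
  rcases le_total e s with hes | hse
  · have hI₀' : I₀ ≤ I ⊔ 𝔭 ^ r := he ▸ hI₀.trans (pow_le_pow_right hes)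
    exact sup_le le_sup_left hI₀' hz
  · have hI : I ≤ 𝔭 ^ s := (le_sup_left.trans he.le).trans (pow_le_pow_right hse)
    exact mem_sup_right (hzs (sup_le hI hI₀ hz))

theorem isCoprime_pow_of_prime_of_ne {P Q : Ideal R} (hP : Prime P) (hQ : Prime Q) (hPQ : P ≠ Q)
    (a b : ℕ) : IsCoprime (P ^ a) (Q ^ b) :=
  (isCoprime_iff_sup_eq.mpr <| ((isPrime_of_prime hP).isMaximal hP.ne_zero).coprime_of_ne
    ((isPrime_of_prime hQ).isMaximal hQ.ne_zero) hPQ).pow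

variable {ι : Type*} [Fintype ι] {𝔭 : ι → Ideal R}

theorem mem_prod_pow_iff (hp : ∀ j, Prime (𝔭 j)) (hinj : Injective 𝔭) (a : ι → ℕ) {z : R} :
    z ∈ ∏ j, 𝔭 j ^ a j ↔ ∀ j, z ∈ 𝔭 j ^ a j := by
  rw [prod_eq_iInf_of_pairwise_isCoprime fun i _ j _ hij =>
    isCoprime_pow_of_prime_of_ne (hp i) (hp j) (hinj.ne hij) (a i) (a j)]
  simp only [Submodule.mem_iInf, mem_univ, forall_const]

theorem le_of_prod_pow_le_pow (hp : ∀ j, Prime (𝔭 j)) (hinj : Injective 𝔭) {a : ι → ℕ} {i : ι}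
    {e : ℕ} (h : ∏ j, 𝔭 j ^ a j ≤ 𝔭 i ^ e) : e ≤ a i := by
  classical
  rw [← mul_prod_erase _ _ (mem_univ i), ← dvd_iff_le] at h
  have hcop : IsCoprime (𝔭 i ^ e) (∏ j ∈ univ.erase i, 𝔭 j ^ a j) :=
    IsCoprime.prod_right fun j hj =>
      isCoprime_pow_of_prime_of_ne (hp i) (hp j) (hinj.ne (ne_of_mem_erase hj).symm) e (a j)
  exact (pow_dvd_pow_iff (hp i).ne_zero (hp i).not_isUnit).mp (hcop.dvd_of_dvd_mul_right h)

end Primes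

end Ideal

/-- `y` agrees modulo each `𝔭 j ^ r j` with a `t j`-adic expansion whose digits lie in `B j` and
vanish from position `s j` on; within `S` this cuts out the set `S_{I j₀}`. -/
def HasTruncatedExpansion {R ι : Type*} [CommRing R] (𝔭 : ι → Ideal R) (t : ι → R)
    (B : ι → Set R) (r s : ι → ℕ) (y : R) : Prop :=
  ∀ j, ∃ c : ℕ → R, (∀ m, c m ∈ B j) ∧ y - digitSum (t j) c (s j) ∈ 𝔭 j ^ r j

namespace HasTruncatedExpansion

open Ideal

variable {R ι : Type*} [CommRing R] [Fintype ι] {𝔭 : ι → Ideal R} {t : ι → R}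
  {B : ι → Set R} {r s : ι → ℕ}

theorem of_sub_mem {y z : R} (hy : HasTruncatedExpansion 𝔭 t B r s y)
    (h : z - y ∈ ∏ j, 𝔭 j ^ r j) : HasTruncatedExpansion 𝔭 t B r s z := fun j => by
  obtain ⟨c, hcB, hc⟩ := hy j
  refine ⟨c, hcB, ?_⟩
  rw [← sub_add_sub_cancel]
  exact add_mem (le_of_dvd (dvd_prod_of_mem _ (mem_univ j)) h) hc

variable [IsDedekindDomain R]

theorem exists_sub_mem (hp : ∀ j, Prime (𝔭 j)) (hinj : Injective 𝔭)
    (ht : ∀ j, t j ∈ 𝔭 j) (ht2 : ∀ j, t j ∉ 𝔭 j ^ 2) (hB : ∀ j x, ∃ β ∈ B j, x - β ∈ 𝔭 j)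
    (h0B : ∀ j, 0 ∈ B j) (hsr : ∀ j, s j ≤ r j) (x : R) :
    ∃ z, HasTruncatedExpansion 𝔭 t B r s z ∧ x - z ∈ ∏ j, 𝔭 j ^ s j := by
  choose c hcB hc using fun j =>
    exists_digits_sub_mem_pow (hp j) (ht j) (ht2 j) (hB j) (h0B j) x (s j)
  obtain ⟨z, hz⟩ := IsDedekindDomain.exists_forall_sub_mem_ideal (s := univ) 𝔭 r
    (fun j _ => hp j) (fun i _ j _ hij => hinj.ne hij) fun j => digitSum (t j) (c j) (s j)
  refine ⟨z, fun j => ⟨c j, hcB j, hz j (mem_univ j)⟩,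
    (mem_prod_pow_iff hp hinj s).mpr fun j => ?_⟩
  rw [← sub_sub_sub_cancel_right x z (digitSum (t j) (c j) (s j))]
  exact sub_mem (hc j) (pow_le_pow_right (hsr j) (hz j (mem_univ j)))

theorem sub_mem_of_mem_sup (hp : ∀ j, Prime (𝔭 j)) (hinj : Injective 𝔭)
    (ht : ∀ j, t j ∈ 𝔭 j) (ht2 : ∀ j, t j ∉ 𝔭 j ^ 2)
    (hB : ∀ j, ∀ β ∈ B j, ∀ β' ∈ B j, β - β' ∈ 𝔭 j → β = β') (hsr : ∀ j, s j ≤ r j)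
    {I : Ideal R} (hI : ∏ j, 𝔭 j ^ r j ≤ I) {y y' : R} (hy : HasTruncatedExpansion 𝔭 t B r s y)
    (hy' : HasTruncatedExpansion 𝔭 t B r s y') (h : y - y' ∈ I ⊔ ∏ j, 𝔭 j ^ s j) :
    y - y' ∈ I := by
  have hj : ∀ j ∈ univ, y - y' ∈ I ⊔ 𝔭 j ^ r j := by
    intro j _
    obtain ⟨c, hcB, hc⟩ := hy j
    obtain ⟨d, hdB, hd⟩ := hy' j
    have hle : ∏ i, 𝔭 i ^ s i ≤ 𝔭 j ^ s j :=
      le_of_dvd (dvd_prod_of_mem (fun i => 𝔭 i ^ s i) (mem_univ j))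
    exact mem_sup_pow_of_mem_sup (hp j) hle h
      (sub_mem_pow_of_sub_digitSum_mem (hp j) (ht j) (ht2 j) (hB j) (hsr j) hcB hdB hc hd)
  have := mem_sup_prod_of_forall_mem_sup (fun i _ j _ hij =>
    isCoprime_pow_of_prime_of_ne (hp i) (hp j) (hinj.ne hij) (r i) (r j)) I hj
  rwa [sup_eq_left.mpr hI] at this

end HasTruncatedExpansion

open NumberField

theorem induced_exact_cover_general {K : Type*} [Field K] [NumberField K]
    {k l : ℕ} (α : Fin k → 𝓞 K) (I : Fin k → Ideal (𝓞 K))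
    (hcover : ∀ x : 𝓞 K, ∃! i : Fin k, x - α i ∈ I i)
    (𝔭 : Fin l → Ideal (𝓞 K)) (hprime : ∀ j, (𝔭 j).IsPrime)
    (hpbot : ∀ j, 𝔭 j ≠ ⊥) (hpinj : Function.Injective 𝔭)
    (r : Fin l → ℕ)
    (hI : (⨅ i, I i) = ∏ j, 𝔭 j ^ r j)
    (t : Fin l → 𝓞 K) (ht : ∀ j, t j ∈ 𝔭 j) (ht2 : ∀ j, t j ∉ 𝔭 j ^ 2)
    (B : Fin l → Set (𝓞 K))
    (hB : ∀ j, ∀ x : 𝓞 K, ∃! β : 𝓞 K, β ∈ B j ∧ x - β ∈ 𝔭 j)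
    (h0B : ∀ j, (0 : 𝓞 K) ∈ B j)
    (S : Set (𝓞 K))
    (hS : ∀ x : 𝓞 K, ∃! y : 𝓞 K, y ∈ S ∧ x - y ∈ (∏ j, 𝔭 j ^ r j : Ideal (𝓞 K)))
    (j₀ : Fin k)
    (s : Fin l → ℕ) (hs : I j₀ = ∏ j, 𝔭 j ^ s j) :
    ∀ x : 𝓞 K, ∃! i : Fin k,
      (∃ y : 𝓞 K, (y - α i ∈ I i) ∧ y ∈ S ∧
          (∀ j, ∃ c : ℕ → 𝓞 K, (∀ m, c m ∈ B j) ∧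
            y - ∑ m ∈ Finset.range (s j), c m * t j ^ m ∈ 𝔭 j ^ r j)) ∧
        x - α i ∈ I i + I j₀ := by
  have hp : ∀ j, Prime (𝔭 j) := fun j => Ideal.prime_of_isPrime (hpbot j) (hprime j)
  have hP : ∀ i, ∏ j, 𝔭 j ^ r j ≤ I i := fun i => hI ▸ iInf_le I i
  have hsr : ∀ j, s j ≤ r j := fun j => Ideal.le_of_prod_pow_le_pow hp hpinj <|
    (hP j₀).trans (hs ▸ Ideal.le_of_dvd (dvd_prod_of_mem _ (mem_univ j)))
  have hBunique : ∀ j, ∀ β ∈ B j, ∀ β' ∈ B j, β - β' ∈ 𝔭 j → β = β' :=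
    fun j β hβ β' hβ' h => (hB j β).unique ⟨hβ, by simp⟩ ⟨hβ', h⟩
  intro x
  obtain ⟨z, hz, hxz⟩ := HasTruncatedExpansion.exists_sub_mem hp hpinj ht ht2
    (fun j x => (hB j x).exists) h0B hsr x
  obtain ⟨y, ⟨hyS, hzy⟩, -⟩ := hS z
  have hy : HasTruncatedExpansion 𝔭 t B r s y := hz.of_sub_mem (neg_sub z y ▸ neg_mem hzy)
  have hxy : x - y ∈ I j₀ := sub_add_sub_cancel x z y ▸ add_mem (hs ▸ hxz) (hP j₀ hzy)
  obtain ⟨i₀, hi₀, hi₀u⟩ := hcover y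
  refine ⟨i₀, ⟨⟨y, hi₀, hyS, hy⟩, ?_⟩, fun i ⟨⟨y', hy'i, _, hy'⟩, hxi⟩ => hi₀u i ?_⟩
  · rw [← sub_add_sub_cancel x y]
    exact add_mem (Submodule.mem_sup_right hxy) (Submodule.mem_sup_left hi₀)
  · have hyy' : y - y' ∈ I i ⊔ ∏ j, 𝔭 j ^ s j := by
      rw [← hs, show y - y' = x - α i - (x - y) - (y' - α i) by ring]
      exact sub_mem (sub_mem hxi (Submodule.mem_sup_right hxy)) (Submodule.mem_sup_left hy'i)
    show y - α i ∈ I i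
    rw [← sub_add_sub_cancel y y' (α i)]
    exact add_mem (hy.sub_mem_of_mem_sup hp hpinj ht ht2 hBunique hsr (hP i) hy' hyy') hy'i

/-- Let `{α_i mod I_i}` be an exact covering system of `𝓞 K` with
`⨅ I_i = ∏ 𝔭_j ^ r_j`, let `I j₀` be a division maximal modulus with
`I j₀ = ∏ 𝔭_j ^ s_j`, and let `S_{I j₀}` be the set of digit-representatives of
`𝓞 K / ⨅ I_i` whose digits in positions `≥ s_j` vanish. With
`J = { i : (α_i + I_i) ∩ S_{I j₀} ≠ ∅ }`, the family
`{α_i mod (I_i + I j₀) : i ∈ J}` is again an exact covering system of `𝓞 K`. -/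
theorem induced_exact_cover {K : Type*} [Field K] [NumberField K]
    {k l : ℕ} (α : Fin k → 𝓞 K) (I : Fin k → Ideal (𝓞 K))
    (hbot : ∀ i, I i ≠ ⊥) (htop : ∀ i, I i ≠ ⊤)
    (hcover : ∀ x : 𝓞 K, ∃! i : Fin k, x - α i ∈ I i)
    (𝔭 : Fin l → Ideal (𝓞 K)) (hprime : ∀ j, (𝔭 j).IsPrime)
    (hpbot : ∀ j, 𝔭 j ≠ ⊥) (hpinj : Function.Injective 𝔭)
    (r : Fin l → ℕ) (hr : ∀ j, 0 < r j)
    (hI : (⨅ i, I i) = ∏ j, 𝔭 j ^ r j)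
    (t : Fin l → 𝓞 K) (ht : ∀ j, t j ∈ 𝔭 j) (ht2 : ∀ j, t j ∉ 𝔭 j ^ 2)
    (B : Fin l → Set (𝓞 K))
    (hB : ∀ j, ∀ x : 𝓞 K, ∃! β : 𝓞 K, β ∈ B j ∧ x - β ∈ 𝔭 j)
    (h0B : ∀ j, (0 : 𝓞 K) ∈ B j)
    (S : Set (𝓞 K))
    (hS : ∀ x : 𝓞 K, ∃! y : 𝓞 K, y ∈ S ∧ x - y ∈ (∏ j, 𝔭 j ^ r j : Ideal (𝓞 K)))
    (j₀ : Fin k) (hdm : ∀ i : Fin k, I j₀ ∣ I i → I i = I j₀)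
    (s : Fin l → ℕ) (hs : I j₀ = ∏ j, 𝔭 j ^ s j) :
    ∀ x : 𝓞 K, ∃! i : Fin k,
      (∃ y : 𝓞 K, (y - α i ∈ I i) ∧ y ∈ S ∧
          (∀ j, ∃ c : ℕ → 𝓞 K, (∀ m, c m ∈ B j) ∧
            y - ∑ m ∈ Finset.range (s j), c m * t j ^ m ∈ 𝔭 j ^ r j)) ∧
        x - α i ∈ I i + I j₀ :=
  induced_exact_cover_general α I hcover 𝔭 hprime hpbot hpinj r hI t ht ht2 B hB h0B S hS j₀ s hs
end

section
/- Let {α_i mod I_i}_{i=1}^k be an exact covering system of O_K. If some modulus I_i is not division maximal, then min{ G(I_i/(I_i+I_j)) : I_j ≠ I_i } = 1; if I_i is division maximal, then G(I_i/(I_i+I_j)) ≥ min{ N(𝔭) : 𝔭 ∣ I_i } for every modulus I_j ≠ I_i. -/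
open NumberField

/-- `GQuot A B` is `G (A / B)` for ideals `B ∣ A`: the largest norm of a prime
power ideal `𝔭 ^ r` dividing the quotient ideal `A / B`. -/
noncomputable def GQuot {K : Type*} [Field K] [NumberField K]
    (A B : Ideal (𝓞 K)) : ℕ :=
  sSup {m : ℕ | ∃ (𝔭 : Ideal (𝓞 K)) (r : ℕ), 𝔭.IsPrime ∧ 𝔭 ^ r * B ∣ A ∧
    m = (𝔭 ^ r).absNorm}

/-- Comparison of the two bounds: if `I i` is not division maximal then
`min { G (I i / (I i + I j)) : I j ≠ I i } = 1`; if `I i` is division maximal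
then `G (I i / (I i + I j)) ≥ min { N 𝔭 : 𝔭 ∣ I i }` for every `I j ≠ I i`. -/
theorem bound_comparison {K : Type*} [Field K] [NumberField K]
    {k : ℕ} (α : Fin k → 𝓞 K) (I : Fin k → Ideal (𝓞 K))
    (hbot : ∀ i, I i ≠ ⊥) (htop : ∀ i, I i ≠ ⊤)
    (hcover : ∀ x : 𝓞 K, ∃! i : Fin k, x - α i ∈ I i) (i : Fin k) :
    ((¬ ∀ j : Fin k, I i ∣ I j → I i = I j) →
        sInf {m : ℕ | ∃ j : Fin k, I j ≠ I i ∧ m = GQuot (I i) (I i + I j)} = 1) ∧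
    ((∀ j : Fin k, I i ∣ I j → I i = I j) →
        ∀ j : Fin k, I j ≠ I i →
          sInf {m : ℕ | ∃ 𝔭 : Ideal (𝓞 K), 𝔭.IsPrime ∧ 𝔭 ∣ I i ∧ m = 𝔭.absNorm} ≤
            GQuot (I i) (I i + I j)) := by
  have hAne : I i ≠ ⊥ := hbot i
  have hApos : 0 < (I i).absNorm := Nat.pos_of_ne_zero (by
    rw [Ne, Ideal.absNorm_eq_zero_iff]; exact hAne)
  have hbdd : ∀ B : Ideal (𝓞 K),
      BddAbove {m : ℕ | ∃ (𝔭 : Ideal (𝓞 K)) (r : ℕ), 𝔭.IsPrime ∧ 𝔭 ^ r * B ∣ I i ∧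
        m = (𝔭 ^ r).absNorm} := by
    intro B
    refine ⟨(I i).absNorm, ?_⟩
    rintro m ⟨𝔭, r, hp, hdvd, rfl⟩
    exact Nat.le_of_dvd hApos
      (map_dvd Ideal.absNorm (dvd_trans (dvd_mul_right _ _) hdvd))
  obtain ⟨M, hM⟩ := Ideal.exists_maximal (𝓞 K)
  have hone : ∀ B : Ideal (𝓞 K), B ∣ I i → 1 ≤ GQuot (I i) B := by
    intro B hB
    refine le_csSup (hbdd B) ⟨M, 0, hM.isPrime, ?_, ?_⟩
    · simpa using hB
    · simp [Ideal.one_eq_top]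
  have hsumdvd : ∀ j : Fin k, I i + I j ∣ I i := by
    intro j
    rw [Ideal.dvd_iff_le, Submodule.add_eq_sup]
    exact le_sup_left
  constructor
  · intro hnot
    push_neg at hnot
    obtain ⟨j, hdvd, hne⟩ := hnot
    have hsum : I i + I j = I i := by
      rw [Submodule.add_eq_sup]
      exact sup_eq_left.mpr (Ideal.le_of_dvd hdvd)
    have hGQ : GQuot (I i) (I i) = 1 := by
      have hset : {m : ℕ | ∃ (𝔭 : Ideal (𝓞 K)) (r : ℕ), 𝔭.IsPrime ∧ 𝔭 ^ r * I i ∣ I i ∧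
          m = (𝔭 ^ r).absNorm} = {1} := by
        ext m
        simp only [Set.mem_setOf_eq, Set.mem_singleton_iff]
        constructor
        · rintro ⟨𝔭, r, hp, hd, rfl⟩
          have hd' : 𝔭 ^ r * I i ∣ 1 * I i := by rw [one_mul]; exact hd
          have h1 : 𝔭 ^ r ∣ 1 := (mul_dvd_mul_iff_right hAne).mp hd'
          have h2 : 𝔭 ^ r = ⊤ := Ideal.isUnit_iff.mp (isUnit_of_dvd_one h1)
          rw [h2, ← Ideal.one_eq_top, map_one]
        · intro hm
          exact ⟨M, 0, hM.isPrime, by simp [Ideal.one_eq_top],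
            by simp [Ideal.one_eq_top, hm]⟩
      rw [GQuot, hset, csSup_singleton]
    apply le_antisymm
    · exact Nat.sInf_le ⟨j, hne.symm, by rw [hsum, hGQ]⟩
    · refine le_csInf ⟨1, ⟨j, hne.symm, by rw [hsum, hGQ]⟩⟩ ?_
      rintro m ⟨j', _, rfl⟩
      exact hone _ (hsumdvd j')
  · intro hmax j hne
    obtain ⟨C, hC⟩ := hsumdvd j
    have hCne : C ≠ ⊤ := by
      intro h
      rw [h, Ideal.mul_top] at hC
      have heq : I i = I i + I j := hC
      have hle : I j ≤ I i := by
        rw [heq, Submodule.add_eq_sup]; exact le_sup_right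
      exact hne ((hmax j (Ideal.dvd_iff_le.mpr hle)).symm)
    obtain ⟨𝔭, hpmax, hple⟩ := Ideal.exists_le_maximal C hCne
    have hpdvdC : 𝔭 ∣ C := Ideal.dvd_iff_le.mpr hple
    have key : 𝔭 ^ 1 * (I i + I j) ∣ I i := by
      rw [pow_one, mul_comm]
      exact (mul_dvd_mul_left (I i + I j) hpdvdC).trans (dvd_of_eq hC.symm)
    have hpdvdI : 𝔭 ∣ I i := dvd_trans (by rw [pow_one]; exact dvd_mul_right 𝔭 _) key
    refine le_trans (Nat.sInf_le ⟨𝔭, hpmax.isPrime, hpdvdI, rfl⟩) ?_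
    exact le_csSup (hbdd _) ⟨𝔭, 1, hpmax.isPrime, key, by rw [pow_one]⟩
end

section
/- Let τ be a cell partition of the parallelotope P(n; b) with at least two cells. Then there exists a subset-minimal cell E ∈ τ and at least min{b_i : i ∉ I(E)} ≥ 2 distinct cells in τ with index exactly I(E); in particular, no cell partition of P(n;b) into at least two cells has a unique cell whose index set is a strict subset of the index sets of all other cells. -/
/-- In any cell partition of the parallelotope `P(n; b)` (all `b i ≥ 2`) into at
least two cells, there is a subset-minimal cell `E` such that the partition
contains at least `min { b i : i ∉ I(E) } ≥ 2` distinct cells with index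
exactly `I(E)`; in particular the cells cannot have pairwise distinct index
sets with a unique minimal one. -/
theorem cell_partition_has_repeated_minimal_index {n : ℕ} (b : Fin n → ℕ)
    (hb : ∀ i, 2 ≤ b i)
    {ι : Type*} [Fintype ι] (C : ι → Set (∀ i, Fin (b i)))
    (Idx : ι → Finset (Fin n)) (u : ι → ∀ i, Fin (b i))
    (hcell : ∀ j, C j = {c | ∀ i ∉ Idx j, c i = u j i})
    (hinj : Function.Injective C)
    (hpart : ∀ x : ∀ i, Fin (b i), ∃! j : ι, x ∈ C j)
    (htwo : 2 ≤ Fintype.card ι) :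
    ∃ E : ι, (∀ j : ι, Idx j ⊆ Idx E → Idx j = Idx E) ∧
      2 ≤ sInf {m : ℕ | ∃ i : Fin n, i ∉ Idx E ∧ m = b i} ∧
      sInf {m : ℕ | ∃ i : Fin n, i ∉ Idx E ∧ m = b i} ≤
        Nat.card {j : ι // Idx j = Idx E} := by
  classical
  have hmem : ∀ j x, x ∈ C j ↔ ∀ i ∉ Idx j, x i = u j i := fun j x => by
    rw [hcell]; exact Iff.rfl
  have hself : ∀ j, u j ∈ C j := fun j => (hmem j (u j)).2 fun i _ => rfl
  obtain ⟨j₀⟩ : Nonempty ι := Fintype.card_pos_iff.mp (by omega)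
  obtain ⟨s0, hs0mem, hs0min⟩ := Finset.exists_minimal (s := Finset.univ.image Idx)
    ⟨Idx j₀, Finset.mem_image_of_mem _ (Finset.mem_univ _)⟩
  obtain ⟨E, -, hE⟩ := Finset.mem_image.mp hs0mem
  subst hE
  have hmin : ∀ j : ι, Idx j ⊆ Idx E → Idx j = Idx E := by
    intro j hsub
    by_contra hne'
    exact hne' (le_antisymm hsub (hs0min (Finset.mem_image_of_mem _ (Finset.mem_univ _)) hsub))
  -- Idx E is not everything
  have hne_univ : ∃ i₀, i₀ ∉ Idx E := by
    by_contra h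
    push_neg at h
    obtain ⟨j, hj⟩ := Fintype.exists_ne_of_one_lt_card (by omega) E
    have h1 : u j ∈ C E := (hmem E (u j)).2 fun i hi => absurd (h i) hi
    obtain ⟨w, -, hw⟩ := hpart (u j)
    exact hj ((hw j (hself j)).trans (hw E h1).symm)
  obtain ⟨i₀, hi₀⟩ := hne_univ
  have hSne : {m : ℕ | ∃ i : Fin n, i ∉ Idx E ∧ m = b i}.Nonempty := ⟨b i₀, i₀, hi₀, rfl⟩
  obtain ⟨i₁, hi₁, hmi₁⟩ := Nat.sInf_mem hSne
  set m : ℕ := sInf {m : ℕ | ∃ i : Fin n, i ∉ Idx E ∧ m = b i} with hmdef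
  have hm2 : 2 ≤ m := by rw [hmi₁]; exact hb i₁
  have hmle : ∀ i, i ∉ Idx E → m ≤ b i := fun i hi => Nat.sInf_le ⟨i, hi, rfl⟩
  -- the character functions
  set f : ∀ i : Fin n, Fin (b i) → ℤ :=
    fun i t => if t = u E i then (b i : ℤ) - 1 else -1 with hf
  have hfsum : ∀ i, (∑ t : Fin (b i), f i t) = 0 := by
    intro i
    have h1 : ∀ t : Fin (b i), f i t = (if t = u E i then (b i : ℤ) else 0) - 1 := by
      intro t
      by_cases h : t = u E i <;> simp [hf, h]
    rw [Finset.sum_congr rfl fun t _ => h1 t, Finset.sum_sub_distrib,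
      Finset.sum_ite_eq' Finset.univ (u E i) fun _ => (b i : ℤ)]
    simp
  have hfabs : ∀ i (v : Fin (b i)), |f i v| ≤ (b i : ℤ) - 1 := by
    intro i v
    simp only [hf]
    have : (2 : ℤ) ≤ b i := by exact_mod_cast hb i
    split
    · rw [abs_of_nonneg (by linarith)]
    · rw [abs_neg, abs_one]; linarith
  set G : ι → ∀ i : Fin n, Fin (b i) → ℤ := fun j i t =>
    (if i ∈ Idx j then 1 else if t = u j i then 1 else 0) *
      (if i ∈ Idx E then 1 else f i t) with hG
  set H : ∀ i : Fin n, Fin (b i) → ℤ := fun i t => if i ∈ Idx E then 1 else f i t with hH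
  -- indicator of a cell as a product
  have hind : ∀ j y, (∏ i, (if i ∈ Idx j then (1 : ℤ) else if y i = u j i then 1 else 0))
      = if y ∈ C j then 1 else 0 := by
    intro j y
    by_cases hy : y ∈ C j
    · rw [if_pos hy]
      apply Finset.prod_eq_one
      intro i _
      by_cases hij : i ∈ Idx j
      · simp [hij]
      · simp [hij, (hmem j y).1 hy i hij]
    · rw [if_neg hy]
      rw [hmem] at hy
      push_neg at hy
      obtain ⟨i, hi1, hi2⟩ := hy
      exact Finset.prod_eq_zero (Finset.mem_univ i) (by simp [hi1, hi2])
  have hone : ∀ y, (∑ j : ι, if y ∈ C j then (1 : ℤ) else 0) = 1 := by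
    intro y
    obtain ⟨jy, hjy, huniq⟩ := hpart y
    rw [Finset.sum_eq_single jy]
    · rw [if_pos hjy]
    · intro j _ hnej
      exact if_neg fun hyj => hnej (huniq j hyj)
    · intro hj; exact absurd (Finset.mem_univ jy) hj
  -- total sum vanishes
  have hA0 : (∑ j : ι, ∏ i, ∑ t : Fin (b i), G j i t) = 0 := by
    have step : ∀ j : ι, (∏ i, ∑ t : Fin (b i), G j i t)
        = ∑ y : ∀ i, Fin (b i), (if y ∈ C j then (1 : ℤ) else 0) * ∏ i, H i (y i) := by
      intro j
      rw [Finset.prod_univ_sum (fun i => (Finset.univ : Finset (Fin (b i)))) (G j),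
        Fintype.piFinset_univ]
      refine Finset.sum_congr rfl fun y _ => ?_
      rw [← hind j y, ← Finset.prod_mul_distrib]
    rw [Finset.sum_congr rfl fun j _ => step j, Finset.sum_comm]
    have h2 : ∀ y : ∀ i, Fin (b i),
        (∑ j : ι, (if y ∈ C j then (1 : ℤ) else 0) * ∏ i, H i (y i))
        = ∏ i, H i (y i) := by
      intro y
      rw [← Finset.sum_mul, hone y, one_mul]
    rw [Finset.sum_congr rfl fun y _ => h2 y, ← Fintype.piFinset_univ,
      ← Finset.prod_univ_sum (fun i => (Finset.univ : Finset (Fin (b i)))) H]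
    apply Finset.prod_eq_zero (Finset.mem_univ i₁)
    have : ∀ t : Fin (b i₁), H i₁ t = f i₁ t := by
      intro t; simp only [hH]; exact if_neg hi₁
    rw [Finset.sum_congr rfl fun t _ => this t]
    exact hfsum i₁
  -- per-cell computations
  have hGsum2 : ∀ j i, i ∈ Idx j → i ∉ Idx E → (∑ t : Fin (b i), G j i t) = 0 := by
    intro j i h1 h2
    have : ∀ t : Fin (b i), G j i t = f i t := by
      intro t; simp only [hG]; simp only [if_pos h1, if_neg h2, one_mul]
    rw [Finset.sum_congr rfl fun t _ => this t]
    exact hfsum i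
  have hGsum1 : ∀ j i, i ∈ Idx j → i ∈ Idx E → (∑ t : Fin (b i), G j i t) = (b i : ℤ) := by
    intro j i h1 h2
    have : ∀ t : Fin (b i), G j i t = 1 := by
      intro t; simp only [hG]; simp only [if_pos h1, if_pos h2, one_mul]
    rw [Finset.sum_congr rfl fun t _ => this t]
    simp
  have hGsum4 : ∀ j i, i ∉ Idx j → i ∉ Idx E →
      (∑ t : Fin (b i), G j i t) = f i (u j i) := by
    intro j i h1 h2
    have h3 : ∀ t : Fin (b i), G j i t = if t = u j i then f i t else 0 := by
      intro t; simp only [hG]; simp only [if_neg h1, if_neg h2, ite_mul, one_mul, zero_mul]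
    rw [Finset.sum_congr rfl fun t _ => h3 t,
      Finset.sum_ite_eq' Finset.univ (u j i) (f i)]
    simp
  set T : Finset ι := Finset.univ.filter (fun j => Idx j = Idx E) with hT
  have hET : E ∈ T := Finset.mem_filter.mpr ⟨Finset.mem_univ E, rfl⟩
  have hAT : (∑ j ∈ T, ∏ i, ∑ t : Fin (b i), G j i t) = 0 := by
    rw [← hA0]
    apply Finset.sum_subset (Finset.subset_univ T)
    intro j _ hjT
    have hne' : Idx j ≠ Idx E := by
      intro h; exact hjT (Finset.mem_filter.mpr ⟨Finset.mem_univ j, h⟩)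
    have hns : ¬ Idx j ⊆ Idx E := fun hs => hne' (hmin j hs)
    obtain ⟨i, hi1, hi2⟩ := Finset.not_subset.mp hns
    exact Finset.prod_eq_zero (Finset.mem_univ i) (hGsum2 j i hi1 hi2)
  set q : ι → ℤ := fun j => ∏ i ∈ (Idx E)ᶜ, f i (u j i) with hq
  set P : ℤ := ∏ i ∈ (Idx E)ᶜ, ((b i : ℤ) - 1) with hP
  have hPpos : 0 < P := by
    rw [hP]
    apply Finset.prod_pos
    intro i _
    have : (2 : ℤ) ≤ b i := by exact_mod_cast hb i
    linarith
  have hcval : ∀ j ∈ T, (∏ i, ∑ t : Fin (b i), G j i t)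
      = (∏ i ∈ Idx E, (b i : ℤ)) * q j := by
    intro j hj
    have hjE : Idx j = Idx E := (Finset.mem_filter.mp hj).2
    rw [← Finset.prod_mul_prod_compl (Idx E) (fun i => ∑ t : Fin (b i), G j i t)]
    congr 1
    · exact Finset.prod_congr rfl fun i hi => hGsum1 j i (hjE ▸ hi) hi
    · refine Finset.prod_congr rfl fun i hi => ?_
      have hiE : i ∉ Idx E := Finset.mem_compl.mp hi
      exact hGsum4 j i (fun h => hiE (hjE ▸ h)) hiE
  have hqsum : (∑ j ∈ T, q j) = 0 := by
    have hB : (0 : ℤ) < ∏ i ∈ Idx E, (b i : ℤ) := by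
      apply Finset.prod_pos
      intro i _
      have : (2 : ℤ) ≤ b i := by exact_mod_cast hb i
      linarith
    have h1 : (∏ i ∈ Idx E, (b i : ℤ)) * (∑ j ∈ T, q j) = 0 := by
      rw [Finset.mul_sum, ← hAT]
      exact Finset.sum_congr rfl fun j hj => (hcval j hj).symm
    rcases mul_eq_zero.mp h1 with h | h
    · exact absurd h (ne_of_gt hB)
    · exact h
  have hqE : q E = P := by
    rw [hq, hP]
    exact Finset.prod_congr rfl fun i _ => by simp [hf]
  -- key bound for other cells with the same index
  have hkey : ∀ j ∈ T, j ≠ E → ((m : ℤ) - 1) * |q j| ≤ P := by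
    intro j hj hjne
    have hjE : Idx j = Idx E := (Finset.mem_filter.mp hj).2
    have hdiff : ¬ ∀ i ∉ Idx E, u j i = u E i := by
      intro hall
      apply hjne
      apply hinj
      rw [hcell, hcell, hjE]
      apply Set.ext
      intro y
      constructor
      · intro h i hi; rw [← hall i hi]; exact h i hi
      · intro h i hi; rw [hall i hi]; exact h i hi
    push_neg at hdiff
    obtain ⟨i', hi'1, hi'2⟩ := hdiff
    have hi'c : i' ∈ (Idx E)ᶜ := Finset.mem_compl.mpr hi'1
    have habsq : |q j| = ∏ i ∈ (Idx E)ᶜ, |f i (u j i)| := by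
      rw [hq, Finset.abs_prod]
    have hfi' : |f i' (u j i')| = 1 := by
      simp only [hf, if_neg hi'2, abs_neg, abs_one]
    have h1 : |q j| = ∏ i ∈ (Idx E)ᶜ.erase i', |f i (u j i)| := by
      rw [habsq, ← Finset.mul_prod_erase _ _ hi'c, hfi', one_mul]
    have h2 : (∏ i ∈ (Idx E)ᶜ.erase i', |f i (u j i)|)
        ≤ ∏ i ∈ (Idx E)ᶜ.erase i', ((b i : ℤ) - 1) := by
      apply Finset.prod_le_prod
      · intro i _; exact abs_nonneg _
      · intro i _; exact hfabs i (u j i)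
    have h3 : ((m : ℤ) - 1) ≤ (b i' : ℤ) - 1 := by
      have := hmle i' hi'1
      have : (m : ℤ) ≤ b i' := by exact_mod_cast this
      linarith
    have h4 : (0 : ℤ) ≤ ∏ i ∈ (Idx E)ᶜ.erase i', ((b i : ℤ) - 1) := by
      apply Finset.prod_nonneg
      intro i _
      have : (2 : ℤ) ≤ b i := by exact_mod_cast hb i
      linarith
    calc ((m : ℤ) - 1) * |q j|
        = ((m : ℤ) - 1) * ∏ i ∈ (Idx E)ᶜ.erase i', |f i (u j i)| := by rw [h1]
      _ ≤ ((m : ℤ) - 1) * ∏ i ∈ (Idx E)ᶜ.erase i', ((b i : ℤ) - 1) := by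
          apply mul_le_mul_of_nonneg_left h2
          have : (2 : ℤ) ≤ m := by exact_mod_cast hm2
          linarith
      _ ≤ ((b i' : ℤ) - 1) * ∏ i ∈ (Idx E)ᶜ.erase i', ((b i : ℤ) - 1) :=
          mul_le_mul_of_nonneg_right h3 h4
      _ = P := by rw [hP]; exact Finset.mul_prod_erase _ (fun i => ((b i : ℤ) - 1)) hi'c
  -- put it all together
  have hsum0 : q E + ∑ j ∈ T.erase E, q j = 0 := by
    rw [Finset.add_sum_erase _ _ hET]; exact hqsum
  have hPeq : P = |∑ j ∈ T.erase E, q j| := by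
    have h1 : ∑ j ∈ T.erase E, q j = -P := by
      rw [hqE] at hsum0; linarith
    rw [h1, abs_neg, abs_of_nonneg hPpos.le]
  have hfinal : ((m : ℤ) - 1) * P ≤ ((T.erase E).card : ℤ) * P := by
    calc ((m : ℤ) - 1) * P = ((m : ℤ) - 1) * |∑ j ∈ T.erase E, q j| := by rw [hPeq]
      _ ≤ ((m : ℤ) - 1) * ∑ j ∈ T.erase E, |q j| := by
          apply mul_le_mul_of_nonneg_left (Finset.abs_sum_le_sum_abs _ _)
          have : (2 : ℤ) ≤ m := by exact_mod_cast hm2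
          linarith
      _ = ∑ j ∈ T.erase E, ((m : ℤ) - 1) * |q j| := Finset.mul_sum _ _ _
      _ ≤ ∑ j ∈ T.erase E, P := Finset.sum_le_sum fun j hj =>
          hkey j (Finset.mem_of_mem_erase hj) (Finset.ne_of_mem_erase hj)
      _ = ((T.erase E).card : ℤ) * P := by rw [Finset.sum_const, nsmul_eq_mul]
  have h5 : ((m : ℤ) - 1) ≤ ((T.erase E).card : ℤ) :=
    le_of_mul_le_mul_right hfinal hPpos
  have hcarde : (T.erase E).card = T.card - 1 := Finset.card_erase_of_mem hET
  have hTpos : 1 ≤ T.card := Finset.card_pos.mpr ⟨E, hET⟩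
  have h6 : m ≤ T.card := by
    rw [hcarde] at h5
    have h7 : ((T.card - 1 : ℕ) : ℤ) = (T.card : ℤ) - 1 := by
      rw [Nat.cast_sub hTpos]; simp
    rw [h7] at h5
    have : (m : ℤ) ≤ (T.card : ℤ) := by linarith
    exact_mod_cast this
  have hcard : Nat.card {j : ι // Idx j = Idx E} = T.card := by
    rw [Nat.card_eq_fintype_card, Fintype.card_subtype]
  exact ⟨E, hmin, hm2, hcard ▸ h6⟩
end

section
/- Let {α_i mod I_i}_{i=1}^k be a collection of cosets in O_K with I = ∩_i I_i = ∏_{j=1}^l 𝔭_j^{r_j}, and let f be the bijection from O_K/I to the parallelotope P(n; b) (n = Σ_j r_j, b the vector repeating N(𝔭_j) exactly r_j times) given by 𝔭_j-adic digit expansions of CRT components. Then for each i, the image under f of the set of classes mod I contained in α_i + I_i is a cell of P(n;b), and {α_i mod I_i} is an exact covering system if and only if these images form a cell partition of P(n;b); moreover I_i ∣ I_t if and only if I(f(α_i mod I_i)) ⊇ I(f(α_t mod I_t)). -/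
/-!
Writing elements in base a uniformizer `t ∈ 𝔭 \ 𝔭²` with digits from a residue system of `𝔭`,
two elements are congruent modulo `𝔭 ^ s` (for `s ≤ r`) exactly when their first `s` digits
agree: if the `s`-th digit is the first to differ, the difference `c ∉ 𝔭` of its representatives
would satisfy `c * t ^ s ∈ 𝔭 ^ (s + 1)`.
An ideal `J ⊇ ∏ 𝔭ⱼ ^ rⱼ` is the intersection of its components `J ⊔ 𝔭ⱼ ^ rⱼ = 𝔭ⱼ ^ sⱼ`, since `⊔`
distributes over intersections of pairwise coprime ideals. So a coset of `J` is cut out by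
prescribing the first `sⱼ` digits at each `𝔭ⱼ`, and its digit vectors form a cell. As `f` is a
bijection, exact covers correspond to cell partitions, and inclusions of ideals to inclusions of
cells with a common centre, i.e. to inclusions of their index sets.
-/

open NumberField Finset

namespace Ideal

variable {R : Type*} [CommRing R]

theorem sup_inf_eq_of_sup_eq_top {J A B : Ideal R} (h : A ⊔ B = ⊤) :
    J ⊔ A ⊓ B = (J ⊔ A) ⊓ (J ⊔ B) := by
  refine le_antisymm (le_inf (sup_le_sup_left inf_le_left _) (sup_le_sup_left inf_le_right _)) ?_
  have hcop : (J ⊔ A) ⊔ (J ⊔ B) = ⊤ := top_unique (h ▸ sup_le_sup le_sup_right le_sup_right)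
  rw [← mul_eq_inf_of_coprime hcop, sup_mul, mul_sup, mul_sup]
  exact sup_le (sup_le (le_sup_of_le_left mul_le_left) (le_sup_of_le_left mul_le_left))
    (sup_le (le_sup_of_le_left mul_le_right) (le_sup_of_le_right mul_le_inf))

theorem sup_biInf_eq_of_pairwise_sup_eq_top {ι : Type*} {s : Finset ι} {J : Ideal R}
    {A : ι → Ideal R} (h : ∀ i ∈ s, ∀ k ∈ s, i ≠ k → A i ⊔ A k = ⊤) :
    J ⊔ ⨅ i ∈ s, A i = ⨅ i ∈ s, (J ⊔ A i) := by
  classical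
  induction s using Finset.induction with
  | empty => simp
  | @insert a s ha ih =>
    have hcop : A a ⊔ ⨅ i ∈ s, A i = ⊤ := sup_iInf_eq_top fun i hi =>
      h a (mem_insert_self a s) i (mem_insert_of_mem hi) (ne_of_mem_of_not_mem hi ha).symm
    rw [Finset.iInf_insert, Finset.iInf_insert, sup_inf_eq_of_sup_eq_top hcop,
      ih fun i hi k hk => h i (mem_insert_of_mem hi) k (mem_insert_of_mem hk)]

theorem sum_mul_pow_mem_pow {p : Ideal R} {t : R} (ht : t ∈ p) {r s : ℕ} (c : Fin r → R)
    (S : Finset (Fin r)) (hc : ∀ m ∈ S, (m : ℕ) < s → c m = 0) :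
    ∑ m ∈ S, c m * t ^ (m : ℕ) ∈ p ^ s := by
  refine Ideal.sum_mem _ fun m hm => ?_
  rcases lt_or_ge (m : ℕ) s with hlt | hge
  · simp [hc m hm hlt]
  · exact mul_mem_left _ _ (pow_le_pow_right hge (pow_mem_pow ht _))

variable [IsDedekindDomain R]

theorem exists_sup_pow_eq_pow_s19 {p : Ideal R} [hp : p.IsPrime] (hp0 : p ≠ ⊥) (J : Ideal R)
    (r : ℕ) : ∃ s ≤ r, J ⊔ p ^ r = p ^ s := by
  obtain ⟨s, hs, hJ⟩ :=
    (dvd_prime_pow (prime_of_isPrime hp0 hp) r).mp (dvd_iff_le.mpr le_sup_right)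
  exact ⟨s, hs, associated_iff_eq.mp hJ⟩

theorem exists_eq_iInf_pow_of_iInf_pow_le {ι : Type*} [Fintype ι] {𝔭 : ι → Ideal R}
    (hprime : ∀ j, (𝔭 j).IsPrime) (hpbot : ∀ j, 𝔭 j ≠ ⊥) (hpinj : Function.Injective 𝔭)
    {r : ι → ℕ} {J : Ideal R} (hJ : ⨅ j, 𝔭 j ^ r j ≤ J) :
    ∃ s ≤ r, J = ⨅ j, 𝔭 j ^ s j := by
  choose s hsr hs using fun j => exists_sup_pow_eq_pow_s19 (hp := hprime j) (hpbot j) J (r j)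
  have hcop : ∀ i ∈ univ, ∀ k ∈ univ, i ≠ k → 𝔭 i ^ r i ⊔ 𝔭 k ^ r k = ⊤ := fun i _ k _ hik =>
    pow_sup_pow_eq_top <| ((hprime i).isMaximal (hpbot i)).coprime_of_ne
      ((hprime k).isMaximal (hpbot k)) (hpinj.ne hik)
  refine ⟨s, hsr, ?_⟩
  calc J = J ⊔ ⨅ j, 𝔭 j ^ r j := (sup_eq_left.mpr hJ).symm
    _ = ⨅ j, (J ⊔ 𝔭 j ^ r j) := by
      simpa only [mem_univ, iInf_pos] using sup_biInf_eq_of_pairwise_sup_eq_top (J := J) hcop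
    _ = ⨅ j, 𝔭 j ^ s j := by simp only [hs]

theorem prod_pow_eq_iInf_pow {ι : Type*} [Fintype ι] {𝔭 : ι → Ideal R}
    (hprime : ∀ j, (𝔭 j).IsPrime) (hpbot : ∀ j, 𝔭 j ≠ ⊥) (hpinj : Function.Injective 𝔭)
    (r : ι → ℕ) : ∏ j, 𝔭 j ^ r j = ⨅ j, 𝔭 j ^ r j := by
  rw [← inf_univ_eq_iInf, IsDedekindDomain.inf_pow_eq_prod_of_prime _ _ _
    (fun j _ => prime_of_isPrime (hpbot j) (hprime j)) fun _ _ _ _ => hpinj.ne]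

theorem pow_notMem_pow_succ {p : Ideal R} [p.IsPrime] (hp0 : p ≠ ⊥) {t : R} (ht : t ∈ p)
    (ht2 : t ∉ p ^ 2) (s : ℕ) : t ^ s ∉ p ^ (s + 1) := by
  have hpr := prime_of_isPrime hp0 ‹_›
  obtain ⟨J, hJ⟩ : p ∣ span {t} := dvd_span_singleton.mpr ht
  have hJp : ¬ p ∣ J := fun h => ht2 <| by
    rw [← dvd_span_singleton, hJ, sq]; exact mul_dvd_mul_left p h
  intro h
  rw [← dvd_span_singleton, ← span_singleton_pow, hJ, mul_pow, pow_succ] at h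
  exact hJp (hpr.dvd_of_dvd_pow ((mul_dvd_mul_iff_left (pow_ne_zero s hpr.ne_zero)).mp h))

theorem sum_mul_pow_mem_pow_iff {p : Ideal R} [p.IsPrime] (hp0 : p ≠ ⊥) {t : R} (ht : t ∈ p)
    (ht2 : t ∉ p ^ 2) {r : ℕ} (c : Fin r → R) (hc : ∀ m, c m ∈ p → c m = 0) {s : ℕ}
    (hs : s ≤ r) : ∑ m, c m * t ^ (m : ℕ) ∈ p ^ s ↔ ∀ m : Fin r, (m : ℕ) < s → c m = 0 := by
  refine ⟨fun h => ?_, fun h => sum_mul_pow_mem_pow ht c _ fun m _ => h m⟩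
  induction s with
  | zero => exact fun m hm => absurd hm m.val.not_lt_zero
  | succ s ih =>
    have hlow := ih (by omega) (pow_le_pow_right s.le_succ h)
    let m₀ : Fin r := ⟨s, hs⟩
    have hrest : ∑ m ∈ univ.erase m₀, c m * t ^ (m : ℕ) ∈ p ^ (s + 1) :=
      sum_mul_pow_mem_pow ht c _ fun m hm hms => hlow m <| lt_of_le_of_ne (Nat.lt_succ_iff.mp hms)
        fun h => (mem_erase.mp hm).1 (Fin.ext h)
    have hlead : t ^ s * c m₀ ∈ p ^ (s + 1) := by
      have := sub_mem h hrest
      rwa [← add_sum_erase _ _ (mem_univ m₀), add_sub_cancel_right, mul_comm] at this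
    have hm₀ : c m₀ = 0 :=
      hc m₀ (mem_prime_of_mul_mem_pow hp0 (pow_notMem_pow_succ hp0 ht ht2 s) hlead)
    intro m hm
    rcases (Nat.lt_succ_iff.mp hm).lt_or_eq with hlt | heq
    · exact hlow m hlt
    · rwa [show m = m₀ from Fin.ext heq]

theorem sub_mem_pow_iff_forall_digit_eq {p : Ideal R} [p.IsPrime] (hp0 : p ≠ ⊥) {t : R}
    (ht : t ∈ p) (ht2 : t ∉ p ^ 2) {N : ℕ} {e : Fin N → R}
    (he : ∀ x : R, ∃! m : Fin N, x - e m ∈ p) {r : ℕ} {d d' : Fin r → Fin N} {x y : R}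
    (hx : x - ∑ m, e (d m) * t ^ (m : ℕ) ∈ p ^ r) (hy : y - ∑ m, e (d' m) * t ^ (m : ℕ) ∈ p ^ r)
    {s : ℕ} (hs : s ≤ r) : x - y ∈ p ^ s ↔ ∀ m : Fin r, (m : ℕ) < s → d m = d' m := by
  have he_inj : Function.Injective e := fun m m' h =>
    (he (e m)).unique (by simp) (by simp [h])
  have hdigit : ∀ m, e (d m) - e (d' m) = 0 ↔ d m = d' m := fun m => by
    rw [sub_eq_zero, he_inj.eq_iff]
  have hsum : ∑ m, (e (d m) - e (d' m)) * t ^ (m : ℕ) =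
      (x - y) - ((x - ∑ m, e (d m) * t ^ (m : ℕ)) - (y - ∑ m, e (d' m) * t ^ (m : ℕ))) := by
    simp only [sub_mul, sum_sub_distrib]; ring
  rw [← Submodule.sub_mem_iff_left _ (pow_le_pow_right hs (sub_mem hx hy)), ← hsum,
    sum_mul_pow_mem_pow_iff hp0 ht ht2 _ _ hs]
  · simp only [hdigit]
  · intro m hm
    rw [hdigit]
    exact (he (e (d m))).unique (by simp) (by simpa using hm)

end Ideal

section Cell

variable {α : Type*} {κ : α → Type*} {β : ∀ a, κ a → Type*}

/-- `T` is the index set `I(·)` of the cell in the paper's notation. -/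
def cell (T : Finset (Σ a, κ a)) (u : ∀ a m, β a m) : Set (∀ a m, β a m) :=
  {p | ∀ a m, (⟨a, m⟩ : Σ a, κ a) ∉ T → p a m = u a m}

theorem cell_subset_cell_iff [∀ a m, Nontrivial (β a m)] {T T' : Finset (Σ a, κ a)}
    {u : ∀ a m, β a m} : cell T u ⊆ cell T' u ↔ T ⊆ T' := by
  classical
  refine ⟨fun h => ?_, fun h p hp a m hm => hp a m fun hmT => hm (h hmT)⟩
  rintro ⟨a, m⟩ haT
  by_contra haT'
  obtain ⟨v, hv⟩ := exists_ne (u a m)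
  have hmem : Function.update u a (Function.update (u a) m v) ∈ cell T u := by
    intro a' m' h'
    rcases eq_or_ne a' a with rfl | ha
    · have hm : m' ≠ m := by rintro rfl; exact h' haT
      simp [hm]
    · simp [ha]
  exact hv (by simpa using h hmem a m haT')

theorem Ideal.le_iff_subset_of_sub_mem_iff_mem_cell {R : Type*} [Ring R]
    [∀ a m, Nontrivial (β a m)] {D : R → ∀ a m, β a m} (hD : Function.Surjective D)
    {J J' : Ideal R} {T T' : Finset (Σ a, κ a)}
    (hJ : ∀ x y, x - y ∈ J ↔ D x ∈ cell T (D y))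
    (hJ' : ∀ x y, x - y ∈ J' ↔ D x ∈ cell T' (D y)) :
    J ≤ J' ↔ T ⊆ T' :=
  calc J ≤ J' ↔ ∀ x, D x ∈ cell T (D 0) → D x ∈ cell T' (D 0) := by
        simp only [SetLike.le_def, ← hJ, ← hJ', sub_zero]
    _ ↔ cell T (D 0) ⊆ cell T' (D 0) :=
        (hD.forall (p := fun q => q ∈ cell T (D 0) → q ∈ cell T' (D 0))).symm
    _ ↔ T ⊆ T' := cell_subset_cell_iff

end Cell

def IsDigitExpansion {R ι : Type*} [CommRing R] (𝔭 : ι → Ideal R) {r : ι → ℕ} {β : ι → Type*}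
    (D : R → ∀ j, Fin (r j) → β j) : Prop :=
  ∀ j x y s, s ≤ r j → (x - y ∈ 𝔭 j ^ s ↔ ∀ m : Fin (r j), (m : ℕ) < s → D x j m = D y j m)

namespace Ideal

variable {R : Type*} [CommRing R] {ι : Type*} {𝔭 : ι → Ideal R} {r : ι → ℕ} {β : ι → Type*}
  {D : R → ∀ j, Fin (r j) → β j}

theorem sub_mem_iInf_pow_iff (hD : IsDigitExpansion 𝔭 D) {x y : R} :
    x - y ∈ ⨅ j, 𝔭 j ^ r j ↔ D x = D y := by
  simp only [mem_iInf, hD _ _ _ _ le_rfl, Fin.is_lt, forall_const, funext_iff]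

theorem exists_sub_mem_iff_mem_cell [IsDedekindDomain R] [Fintype ι]
    (hprime : ∀ j, (𝔭 j).IsPrime) (hpbot : ∀ j, 𝔭 j ≠ ⊥) (hpinj : Function.Injective 𝔭)
    (hD : IsDigitExpansion 𝔭 D) {J : Ideal R} (hJ : ⨅ j, 𝔭 j ^ r j ≤ J) :
    ∃ T : Finset (Σ j, Fin (r j)), ∀ x y, x - y ∈ J ↔ D x ∈ cell T (D y) := by
  classical
  obtain ⟨s, hsr, rfl⟩ := exists_eq_iInf_pow_of_iInf_pow_le hprime hpbot hpinj hJ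
  refine ⟨univ.filter fun q => s q.1 ≤ q.2, fun x y => ?_⟩
  simp only [mem_iInf, hD _ _ _ _ (hsr _), cell, Set.mem_ofPred_eq, mem_filter, mem_univ,
    true_and, not_le]

end Ideal

theorem Ideal.natCard_quotient_prod_pow {R : Type*} [CommRing R] [IsDedekindDomain R]
    [Module.Free ℤ R] {ι : Type*} [Fintype ι] (𝔭 : ι → Ideal R) (r : ι → ℕ) :
    Nat.card (R ⧸ ∏ j, 𝔭 j ^ r j) = Nat.card (∀ j, Fin (r j) → Fin (𝔭 j).absNorm) := by
  rw [← Submodule.cardQuot_apply, ← absNorm_apply, map_prod]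
  simp [Nat.card_pi]

theorem cover_to_cell_partition_general {K : Type*} [Field K] [NumberField K]
    {k l : ℕ} (α : Fin k → 𝓞 K) (I : Fin k → Ideal (𝓞 K))
    (𝔭 : Fin l → Ideal (𝓞 K)) (hprime : ∀ j, (𝔭 j).IsPrime)
    (hpbot : ∀ j, 𝔭 j ≠ ⊥) (hpinj : Function.Injective 𝔭)
    (r : Fin l → ℕ)
    (hI : (⨅ i, I i) = ∏ j, 𝔭 j ^ r j)
    (t : Fin l → 𝓞 K) (ht : ∀ j, t j ∈ 𝔭 j) (ht2 : ∀ j, t j ∉ 𝔭 j ^ 2)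
    (e : ∀ j : Fin l, Fin ((𝔭 j).absNorm) → 𝓞 K)
    (he : ∀ j, ∀ x : 𝓞 K, ∃! m : Fin ((𝔭 j).absNorm), x - e j m ∈ 𝔭 j)
    (f : (𝓞 K ⧸ (∏ j, 𝔭 j ^ r j : Ideal (𝓞 K))) →
      ∀ j : Fin l, Fin (r j) → Fin ((𝔭 j).absNorm))
    (hf : ∀ x : 𝓞 K, ∀ j : Fin l,
      x - ∑ m : Fin (r j),
        e j (f (Ideal.Quotient.mk (∏ j, 𝔭 j ^ r j : Ideal (𝓞 K)) x) j m) *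
          t j ^ (m : ℕ) ∈ 𝔭 j ^ (r j : ℕ)) :
    Function.Bijective f ∧
    ∃ (T : Fin k → Finset (Σ j : Fin l, Fin (r j)))
      (u : Fin k → ∀ j : Fin l, Fin (r j) → Fin ((𝔭 j).absNorm)),
      (∀ i : Fin k,
        f '' {c | ∃ x : 𝓞 K,
            Ideal.Quotient.mk (∏ j, 𝔭 j ^ r j : Ideal (𝓞 K)) x = c ∧
              x - α i ∈ I i} =
          {p | ∀ (j : Fin l) (m : Fin (r j)),
            (⟨j, m⟩ : Σ j : Fin l, Fin (r j)) ∉ T i → p j m = u i j m}) ∧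
      ((∀ x : 𝓞 K, ∃! i : Fin k, x - α i ∈ I i) ↔
        (∀ p : ∀ j : Fin l, Fin (r j) → Fin ((𝔭 j).absNorm), ∃! i : Fin k,
          p ∈ f '' {c | ∃ x : 𝓞 K,
            Ideal.Quotient.mk (∏ j, 𝔭 j ^ r j : Ideal (𝓞 K)) x = c ∧
              x - α i ∈ I i})) ∧
      (∀ i i' : Fin k, I i ∣ I i' ↔ T i' ⊆ T i) := by
  set mk := Ideal.Quotient.mk (∏ j, 𝔭 j ^ r j : Ideal (𝓞 K))
  let D := fun x => f (mk x)
  have hD : IsDigitExpansion 𝔭 D := fun j x y _ hs =>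
    have := hprime j
    Ideal.sub_mem_pow_iff_forall_digit_eq (hpbot j) (ht j) (ht2 j) (he j) (hf x j) (hf y j) hs
  have hP := Ideal.prod_pow_eq_iInf_pow hprime hpbot hpinj r
  have hbij : Function.Bijective f := by
    refine (Nat.bijective_iff_injective_and_card f).mpr ⟨?_, Ideal.natCard_quotient_prod_pow 𝔭 r⟩
    refine Ideal.Quotient.mk_surjective.forall₂.mpr fun x y hxy => Ideal.Quotient.eq.mpr ?_
    exact hP ▸ (Ideal.sub_mem_iInf_pow_iff hD).mpr hxy
  have hDsurj : Function.Surjective D := hbij.2.comp Ideal.Quotient.mk_surjective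
  choose T hT using fun i => Ideal.exists_sub_mem_iff_mem_cell hprime hpbot hpinj hD
    (hP ▸ hI ▸ iInf_le I i)
  have himage : ∀ i, f '' {c | ∃ x, mk x = c ∧ x - α i ∈ I i} = cell (T i) (D (α i)) := by
    intro i
    have : {c | ∃ x, mk x = c ∧ x - α i ∈ I i} = mk '' (D ⁻¹' cell (T i) (D (α i))) := by
      ext c; simp [hT, and_comm]
    rw [this, ← Set.image_comp]
    exact hDsurj.image_preimage _
  have : ∀ j, Nontrivial (Fin (𝔭 j).absNorm) := fun j => Fin.nontrivial_iff_two_le.mpr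
    (NumberField.HeightOneSpectrum.one_lt_absNorm ⟨𝔭 j, hprime j, hpbot j⟩)
  refine ⟨hbij, T, fun i => D (α i), himage, ?_, fun i i' => ?_⟩
  · simp only [himage]
    rw [hDsurj.forall]
    simp only [hT]
  · rw [Ideal.dvd_iff_le]
    exact Ideal.le_iff_subset_of_sub_mem_iff_mem_cell hDsurj (hT i') (hT i)

/-- Berger–Felzenbaum–Fraenkel correspondence in a number field: with
`I = ⨅ I_i = ∏ 𝔭_j ^ r_j` and `f : 𝓞 K / I → P(n; b)` the digit-expansion
bijection (its defining property is hypothesis `hf`), the image under `f` of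
the set of classes mod `I` contained in `α_i + I_i` is a cell; the family is an
exact covering system iff these images form a cell partition; and `I_i ∣ I_t`
iff the index of the `i`-th cell contains the index of the `t`-th cell. -/
theorem cover_to_cell_partition {K : Type*} [Field K] [NumberField K]
    {k l : ℕ} (α : Fin k → 𝓞 K) (I : Fin k → Ideal (𝓞 K))
    (hbot : ∀ i, I i ≠ ⊥) (htop : ∀ i, I i ≠ ⊤)
    (𝔭 : Fin l → Ideal (𝓞 K)) (hprime : ∀ j, (𝔭 j).IsPrime)
    (hpbot : ∀ j, 𝔭 j ≠ ⊥) (hpinj : Function.Injective 𝔭)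
    (r : Fin l → ℕ) (hr : ∀ j, 0 < r j)
    (hI : (⨅ i, I i) = ∏ j, 𝔭 j ^ r j)
    (t : Fin l → 𝓞 K) (ht : ∀ j, t j ∈ 𝔭 j) (ht2 : ∀ j, t j ∉ 𝔭 j ^ 2)
    (e : ∀ j : Fin l, Fin ((𝔭 j).absNorm) → 𝓞 K)
    (he : ∀ j, ∀ x : 𝓞 K, ∃! m : Fin ((𝔭 j).absNorm), x - e j m ∈ 𝔭 j)
    (f : (𝓞 K ⧸ (∏ j, 𝔭 j ^ r j : Ideal (𝓞 K))) →
      ∀ j : Fin l, Fin (r j) → Fin ((𝔭 j).absNorm))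
    (hf : ∀ x : 𝓞 K, ∀ j : Fin l,
      x - ∑ m : Fin (r j),
        e j (f (Ideal.Quotient.mk (∏ j, 𝔭 j ^ r j : Ideal (𝓞 K)) x) j m) *
          t j ^ (m : ℕ) ∈ 𝔭 j ^ (r j : ℕ)) :
    Function.Bijective f ∧
    ∃ (T : Fin k → Finset (Σ j : Fin l, Fin (r j)))
      (u : Fin k → ∀ j : Fin l, Fin (r j) → Fin ((𝔭 j).absNorm)),
      (∀ i : Fin k,
        f '' {c | ∃ x : 𝓞 K,
            Ideal.Quotient.mk (∏ j, 𝔭 j ^ r j : Ideal (𝓞 K)) x = c ∧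
              x - α i ∈ I i} =
          {p | ∀ (j : Fin l) (m : Fin (r j)),
            (⟨j, m⟩ : Σ j : Fin l, Fin (r j)) ∉ T i → p j m = u i j m}) ∧
      ((∀ x : 𝓞 K, ∃! i : Fin k, x - α i ∈ I i) ↔
        (∀ p : ∀ j : Fin l, Fin (r j) → Fin ((𝔭 j).absNorm), ∃! i : Fin k,
          p ∈ f '' {c | ∃ x : 𝓞 K,
            Ideal.Quotient.mk (∏ j, 𝔭 j ^ r j : Ideal (𝓞 K)) x = c ∧
              x - α i ∈ I i})) ∧
      (∀ i i' : Fin k, I i ∣ I i' ↔ T i' ⊆ T i) :=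
  cover_to_cell_partition_general α I 𝔭 hprime hpbot hpinj r hI t ht ht2 e he f hf
end
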